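/- arXiv:1501.05157 — 8 statements merged into one kernel-verified Lean document; each statement's English description precedes it below -/
import Mathlib

section
/- Let M be a Fishburn matrix with induced poset R on the set X_M, and let x, y be two elements of X_M with cells c_x and c_y. Then: (1) c_x is strictly SW of c_y if and only if there exist u, v ∈ X_M such that u, x, v, y are pairwise distinct, u R x, x R v, u R v, and y is R-incomparable to each of u, x, v; (2) c_x is strictly NW of c_y if and only if there exist u, v ∈ X_M such that u, v, x, y are pairwise distinct, u R y, u R v and x R v hold, and no other ordered pair among u, v, x, y is in R. In particular, R is (3+1)-free if and only if M has no two distinct nonzero cells with one strictly SW of the other, and R is N-free if and only if M has no two distinct nonzero cells with one strictly NW of the other. -/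
open scoped Classical

namespace FishburnPaper

universe u

/-- A strict partial order: irreflexive and transitive. -/
def StrictOrd {X : Type u} (Q : X → X → Prop) : Prop :=
  (∀ x, ¬ Q x x) ∧ ∀ ⦃x y z⦄, Q x y → Q y z → Q x z

/-- `x` and `y` are comparable by the relation `Q`. -/
def Cmp {X : Type u} (Q : X → X → Prop) (x y : X) : Prop := Q x y ∨ Q y x

/-- Exactly one of the three propositions holds. -/
def ExactlyOne3 (a b c : Prop) : Prop :=
  (a ∨ b ∨ c) ∧ ¬ (a ∧ b) ∧ ¬ (a ∧ c) ∧ ¬ (b ∧ c)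

/-- A C1-pair: `S` and `R` are strict partial orders, any two distinct elements are
comparable by exactly one of them, and `x S y → y R z → x R z` for distinct `x,y,z`. -/
def IsC1Pair {X : Type u} (S R : X → X → Prop) : Prop :=
  StrictOrd S ∧ StrictOrd R ∧
  (∀ x y : X, x ≠ y → Xor' (Cmp S x y) (Cmp R x y)) ∧
  (∀ x y z : X, x ≠ y → y ≠ z → x ≠ z → S x y → R y z → R x z)

/-- A C2-pair: `R` and `T ∪ R` are strict partial orders, any two distinct elements are
comparable by exactly one of `T` and `R`, and the two three-element patterns are forbidden. -/
def IsC2Pair {X : Type u} (T R : X → X → Prop) : Prop :=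
  StrictOrd R ∧ StrictOrd (fun x y => T x y ∨ R x y) ∧
  (∀ x y : X, x ≠ y → Xor' (Cmp T x y) (Cmp R x y)) ∧
  (¬ ∃ x y z : X, x ≠ y ∧ y ≠ z ∧ x ≠ z ∧ T x y ∧ T x z ∧ R y z) ∧
  (¬ ∃ x y z : X, x ≠ y ∧ y ≠ z ∧ x ≠ z ∧ T y x ∧ T z x ∧ R y z)

/-- A Fishburn triple: `S`, `R` and `T ∪ R` are strict partial orders, any two distinct
elements are comparable by exactly one of `T`, `S`, `R`, the axioms C1c, C1c* hold,
and the two three-element patterns of axiom C2c are forbidden. -/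
def IsFishburnTriple {X : Type u} (T S R : X → X → Prop) : Prop :=
  StrictOrd S ∧ StrictOrd R ∧ StrictOrd (fun x y => T x y ∨ R x y) ∧
  (∀ x y : X, x ≠ y → ExactlyOne3 (Cmp T x y) (Cmp S x y) (Cmp R x y)) ∧
  (∀ x y z : X, x ≠ y → y ≠ z → x ≠ z → S x y → R y z → R x z) ∧
  (∀ x y z : X, x ≠ y → y ≠ z → x ≠ z → S x y → R z y → R z x) ∧
  (¬ ∃ x y z : X, x ≠ y ∧ y ≠ z ∧ x ≠ z ∧ T x y ∧ T x z ∧ R y z) ∧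
  (¬ ∃ x y z : X, x ≠ y ∧ y ≠ z ∧ x ≠ z ∧ T y x ∧ T z x ∧ R z y)

/-- `R` contains the poset 2+2: four distinct elements `a,b,c,d` with `a R b`, `c R d`,
and no other ordered pair among them in `R`. -/
def Contains22 {X : Type u} (R : X → X → Prop) : Prop :=
  ∃ a b c d : X, a ≠ b ∧ a ≠ c ∧ a ≠ d ∧ b ≠ c ∧ b ≠ d ∧ c ≠ d ∧
    R a b ∧ R c d ∧
    ¬ R b a ∧ ¬ R a c ∧ ¬ R c a ∧ ¬ R a d ∧ ¬ R d a ∧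
    ¬ R b c ∧ ¬ R c b ∧ ¬ R b d ∧ ¬ R d b ∧ ¬ R d c

/-- `R` contains the poset 3+1: four distinct elements `a,b,c,d` with `a R b`, `b R c`,
`a R c`, and `d` incomparable to each of `a,b,c`. -/
def Contains31 {X : Type u} (R : X → X → Prop) : Prop :=
  ∃ a b c d : X, a ≠ b ∧ a ≠ c ∧ a ≠ d ∧ b ≠ c ∧ b ≠ d ∧ c ≠ d ∧
    R a b ∧ R b c ∧ R a c ∧ ¬ Cmp R d a ∧ ¬ Cmp R d b ∧ ¬ Cmp R d c

/-- `R` contains the poset N: four distinct elements `u,v,x,y` with `u R v`, `u R y`,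
`x R v`, and no other ordered pair among them in `R`. -/
def ContainsN {X : Type u} (R : X → X → Prop) : Prop :=
  ∃ u v x y : X, u ≠ v ∧ u ≠ x ∧ u ≠ y ∧ v ≠ x ∧ v ≠ y ∧ x ≠ y ∧
    R u v ∧ R u y ∧ R x v ∧
    ¬ R v u ∧ ¬ R u x ∧ ¬ R x u ∧ ¬ R y u ∧ ¬ R v x ∧ ¬ R v y ∧
    ¬ R y v ∧ ¬ R x y ∧ ¬ R y x

/-- Number of `Q`-maximal elements. -/
noncomputable def mmax {X : Type u} (Q : X → X → Prop) : ℕ :=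
  Nat.card {x : X // ∀ y : X, ¬ Q x y}

/-- A Fishburn matrix: upper triangular (rows numbered top to bottom), every row and
every column contains a nonzero entry. -/
def IsFishburn {m : ℕ} (M : Fin m → Fin m → ℕ) : Prop :=
  (∀ i j : Fin m, j < i → M i j = 0) ∧
  (∀ i : Fin m, ∃ j : Fin m, M i j ≠ 0) ∧
  (∀ j : Fin m, ∃ i : Fin m, M i j ≠ 0)

/-- A cell `(i, j)` of an `m × m` matrix. -/
abbrev Cell (m : ℕ) := Fin m × Fin m

/-- Cell `c = (i,j)` is smaller than `c' = (i',j')` if `j < i'`. -/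
def Smaller {m : ℕ} (c c' : Cell m) : Prop := c.2 < c'.1

/-- Cells `c` and `c'` are incomparable: neither is smaller than the other. -/
def Incomp {m : ℕ} (c c' : Cell m) : Prop := ¬ Smaller c c' ∧ ¬ Smaller c' c

/-- `c = (i,j)` is strictly SW of `c' = (i',j')` : `i > i'` and `j < j'`. -/
def StrictSW {m : ℕ} (c c' : Cell m) : Prop := c'.1 < c.1 ∧ c.2 < c'.2

/-- `c = (i,j)` is weakly SW of `c' = (i',j')` : `c ≠ c'`, `i ≥ i'` and `j ≤ j'`. -/
def WeakSW {m : ℕ} (c c' : Cell m) : Prop := c ≠ c' ∧ c'.1 ≤ c.1 ∧ c.2 ≤ c'.2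

/-- `c = (i,j)` is strictly NW of `c' = (i',j')` : incomparable, `i < i'` and `j < j'`. -/
def StrictNW {m : ℕ} (c c' : Cell m) : Prop := Incomp c c' ∧ c.1 < c'.1 ∧ c.2 < c'.2

/-- `c = (i,j)` is weakly NW of `c' = (i',j')` : `c ≠ c'`, incomparable, `i ≤ i'`, `j ≤ j'`. -/
def WeakNW {m : ℕ} (c c' : Cell m) : Prop := c ≠ c' ∧ Incomp c c' ∧ c.1 ≤ c'.1 ∧ c.2 ≤ c'.2

/-- A nonzero cell of `M` (on or above the diagonal). -/
def NonzeroCell {m : ℕ} (M : Fin m → Fin m → ℕ) (c : Cell m) : Prop :=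
  c.1 ≤ c.2 ∧ M c.1 c.2 ≠ 0

/-- The ground set `X_M = {(i,j,a) : i ≤ j, a < M i j}` of the poset induced by `M`. -/
abbrev XM {m : ℕ} (M : Fin m → Fin m → ℕ) : Type :=
  {x : Fin m × Fin m × ℕ // x.1 ≤ x.2.1 ∧ x.2.2 < M x.1 x.2.1}

/-- The cell representing an element of `X_M`. -/
def cellOf {m : ℕ} {M : Fin m → Fin m → ℕ} (x : XM M) : Cell m := (x.1.1, x.1.2.1)

/-- The interval order induced by `M`: `(i,j,a) R (i',j',a')` iff `j < i'`. -/
def Rind {m : ℕ} {M : Fin m → Fin m → ℕ} (x y : XM M) : Prop := x.1.2.1 < y.1.1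

/-- A nonzero cell with no other nonzero cell weakly NE of it. -/
def IsWNECell {m : ℕ} (M : Fin m → Fin m → ℕ) (c : Cell m) : Prop :=
  NonzeroCell M c ∧ ∀ c' : Cell m, NonzeroCell M c' → c' ≠ c → ¬ WeakSW c c'

/-- A nonzero cell with no other nonzero cell strictly NE of it. -/
def IsSNECell {m : ℕ} (M : Fin m → Fin m → ℕ) (c : Cell m) : Prop :=
  NonzeroCell M c ∧ ∀ c' : Cell m, NonzeroCell M c' → c' ≠ c → ¬ StrictSW c c'

/-- A nonzero cell with no other nonzero cell strictly SE of it. -/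
def IsSSECell {m : ℕ} (M : Fin m → Fin m → ℕ) (c : Cell m) : Prop :=
  NonzeroCell M c ∧ ∀ c' : Cell m, NonzeroCell M c' → c' ≠ c → ¬ StrictNW c c'

/-- A nonzero cell with no other nonzero cell weakly SE of it. -/
def IsWSECell {m : ℕ} (M : Fin m → Fin m → ℕ) (c : Cell m) : Prop :=
  NonzeroCell M c ∧ ∀ c' : Cell m, NonzeroCell M c' → c' ≠ c → ¬ WeakNW c c'

/-- The number of wNE-cells of `M`. -/
noncomputable def wNEcount {m : ℕ} (M : Fin m → Fin m → ℕ) : ℕ :=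
  Nat.card {c : Cell m // IsWNECell M c}

/-- The number of wSE-cells of `M`. -/
noncomputable def wSEcount {m : ℕ} (M : Fin m → Fin m → ℕ) : ℕ :=
  Nat.card {c : Cell m // IsWSECell M c}

/-- The total weight of the sNE-cells of `M`. -/
noncomputable def sNEweight {m : ℕ} (M : Fin m → Fin m → ℕ) : ℕ :=
  ∑ c : Cell m, if IsSNECell M c then M c.1 c.2 else 0

/-- The total weight of the sSE-cells of `M`. -/
noncomputable def sSEweight {m : ℕ} (M : Fin m → Fin m → ℕ) : ℕ :=
  ∑ c : Cell m, if IsSSECell M c then M c.1 c.2 else 0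

/-- The weight of `M`: the sum of all entries. -/
def weight {m : ℕ} (M : Fin m → Fin m → ℕ) : ℕ := ∑ c : Cell m, M c.1 c.2

/-- The weight of the last column of `M`. -/
def lastColWeight {m : ℕ} (M : Fin m → Fin m → ℕ) : ℕ :=
  ∑ c : Cell m, if c.2.val = m - 1 then M c.1 c.2 else 0

/-- The total weight of the columns of `M` preceding the last one. -/
def prevColWeight {m : ℕ} (M : Fin m → Fin m → ℕ) : ℕ :=
  ∑ c : Cell m, if c.2.val < m - 1 then M c.1 c.2 else 0

/-- The first component of the F1-triple of `M`: `x T₁ y` iff `c_x` strictly NW of `c_y`. -/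
def T1 {m : ℕ} {M : Fin m → Fin m → ℕ} (x y : XM M) : Prop :=
  StrictNW (cellOf x) (cellOf y)

/-- The second component of the F1-triple of `M`: `x S₁ y` iff `c_x` weakly SW of `c_y`,
or `c_x = c_y` and the third coordinate of `x` is smaller than that of `y`. -/
def S1 {m : ℕ} {M : Fin m → Fin m → ℕ} (x y : XM M) : Prop :=
  WeakSW (cellOf x) (cellOf y) ∨ (cellOf x = cellOf y ∧ x.1.2.2 < y.1.2.2)

/-- The first component of the F2-triple of `M`: `x T₂ y` iff `c_x` weakly NW of `c_y`,
or `c_x = c_y` and the third coordinate of `x` is smaller than that of `y`. -/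
def T2 {m : ℕ} {M : Fin m → Fin m → ℕ} (x y : XM M) : Prop :=
  WeakNW (cellOf x) (cellOf y) ∨ (cellOf x = cellOf y ∧ x.1.2.2 < y.1.2.2)

/-- The second component of the F2-triple of `M`: `x S₂ y` iff `c_x` strictly SW of `c_y`. -/
def S2 {m : ℕ} {M : Fin m → Fin m → ℕ} (x y : XM M) : Prop :=
  StrictSW (cellOf x) (cellOf y)

/-- C1-pairs on `Fin n`. -/
abbrev C1PairsOn (n : ℕ) :=
  {p : (Fin n → Fin n → Prop) × (Fin n → Fin n → Prop) // IsC1Pair p.1 p.2}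

/-- C2-pairs on `Fin n`. -/
abbrev C2PairsOn (n : ℕ) :=
  {p : (Fin n → Fin n → Prop) × (Fin n → Fin n → Prop) // IsC2Pair p.1 p.2}

/-- Isomorphism of C1-pairs. -/
def isoC1 {n : ℕ} (p q : C1PairsOn n) : Prop :=
  ∃ f : Fin n ≃ Fin n, ∀ x y : Fin n,
    (p.1.1 x y ↔ q.1.1 (f x) (f y)) ∧ (p.1.2 x y ↔ q.1.2 (f x) (f y))

/-- Isomorphism of C2-pairs. -/
def isoC2 {n : ℕ} (p q : C2PairsOn n) : Prop :=
  ∃ f : Fin n ≃ Fin n, ∀ x y : Fin n,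
    (p.1.1 x y ↔ q.1.1 (f x) (f y)) ∧ (p.1.2 x y ↔ q.1.2 (f x) (f y))

/-- Fishburn matrices of weight `n` (of arbitrary size `m ≥ 1`). -/
abbrev FishburnW (n : ℕ) :=
  {p : Σ m : ℕ, Fin m → Fin m → ℕ // 0 < p.1 ∧ IsFishburn p.2 ∧ weight p.2 = n}


section Aux

variable {m : ℕ} {M : Fin m → Fin m → ℕ}

private lemma ne_of_jval {u x : XM M} (h : (u.1.2.1 : ℕ) ≠ (x.1.2.1 : ℕ)) : u ≠ x :=
  fun he => h (by rw [he])

private lemma ne_of_ival {u x : XM M} (h : (u.1.1 : ℕ) ≠ (x.1.1 : ℕ)) : u ≠ x :=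
  fun he => h (by rw [he])

private lemma elemOfCol (hM : IsFishburn M) (j' : Fin m) :
    ∃ u : XM M, u.1.2.1 = j' ∧ u.1.1 ≤ j' := by
  obtain ⟨i', hi⟩ := hM.2.2 j'
  have hle : i' ≤ j' := by
    by_contra h
    exact hi (hM.1 i' j' (lt_of_not_ge h))
  exact ⟨⟨(i', j', 0), hle, Nat.pos_of_ne_zero hi⟩, rfl, hle⟩

private lemma elemOfRow (hM : IsFishburn M) (i' : Fin m) :
    ∃ u : XM M, u.1.1 = i' ∧ i' ≤ u.1.2.1 := by
  obtain ⟨j', hj⟩ := hM.2.1 i'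
  have hle : i' ≤ j' := by
    by_contra h
    exact hj (hM.1 i' j' (lt_of_not_ge h))
  exact ⟨⟨(i', j', 0), hle, Nat.pos_of_ne_zero hj⟩, rfl, hle⟩

private lemma sw_iff (hM : IsFishburn M) (x y : XM M) :
    StrictSW (cellOf x) (cellOf y) ↔
      ∃ u v : XM M, u ≠ x ∧ u ≠ v ∧ u ≠ y ∧ x ≠ v ∧ x ≠ y ∧ v ≠ y ∧
        Rind u x ∧ Rind x v ∧ Rind u v ∧
        ¬ Cmp Rind y u ∧ ¬ Cmp Rind y x ∧ ¬ Cmp Rind y v := by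
  constructor
  · rintro ⟨h1, h2⟩
    have h1' : (y.1.1 : ℕ) < x.1.1 := h1
    have h2' : (x.1.2.1 : ℕ) < y.1.2.1 := h2
    have hxle : (x.1.1 : ℕ) ≤ x.1.2.1 := x.2.1
    have hyle : (y.1.1 : ℕ) ≤ y.1.2.1 := y.2.1
    have hxm := x.1.1.isLt
    have hym := y.1.2.1.isLt
    have hjm : (x.1.1 : ℕ) - 1 < m := by omega
    have him : (x.1.2.1 : ℕ) + 1 < m := by omega
    obtain ⟨u, huj, hui⟩ := elemOfCol hM ⟨(x.1.1 : ℕ) - 1, hjm⟩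
    obtain ⟨v, hvi, hvj⟩ := elemOfRow hM ⟨(x.1.2.1 : ℕ) + 1, him⟩
    have huj' : (u.1.2.1 : ℕ) = (x.1.1 : ℕ) - 1 := congrArg Fin.val huj
    have hui' : (u.1.1 : ℕ) ≤ (x.1.1 : ℕ) - 1 := by
      have h := u.2.1
      have h' : (u.1.1 : ℕ) ≤ u.1.2.1 := h
      omega
    have hvi' : (v.1.1 : ℕ) = (x.1.2.1 : ℕ) + 1 := congrArg Fin.val hvi
    have hvj' : (x.1.2.1 : ℕ) + 1 ≤ v.1.2.1 := hvj
    refine ⟨u, v, ne_of_jval (by omega), ne_of_jval (by omega), ne_of_jval (by omega),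
      ne_of_jval (by omega), ne_of_ival (by omega), ne_of_ival (by omega),
      show (u.1.2.1 : ℕ) < x.1.1 by omega,
      show (x.1.2.1 : ℕ) < v.1.1 by omega,
      show (u.1.2.1 : ℕ) < v.1.1 by omega, ?_, ?_, ?_⟩
    · rintro (h | h)
      · have h' : (y.1.2.1 : ℕ) < u.1.1 := h; omega
      · have h' : (u.1.2.1 : ℕ) < y.1.1 := h; omega
    · rintro (h | h)
      · have h' : (y.1.2.1 : ℕ) < x.1.1 := h; omega
      · have h' : (x.1.2.1 : ℕ) < y.1.1 := h; omega
    · rintro (h | h)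
      · have h' : (y.1.2.1 : ℕ) < v.1.1 := h; omega
      · have h' : (v.1.2.1 : ℕ) < y.1.1 := h; omega
  · rintro ⟨u, v, -, -, -, -, -, -, hux, hxv, -, hyu, -, hyv⟩
    have h1 : (u.1.2.1 : ℕ) < x.1.1 := hux
    have h2 : (x.1.2.1 : ℕ) < v.1.1 := hxv
    have h3 : ¬ (u.1.2.1 : ℕ) < y.1.1 := fun h => hyu (Or.inr h)
    have h4 : ¬ (y.1.2.1 : ℕ) < v.1.1 := fun h => hyv (Or.inl h)
    exact ⟨show (y.1.1 : ℕ) < x.1.1 by omega, show (x.1.2.1 : ℕ) < y.1.2.1 by omega⟩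

private lemma nw_iff (hM : IsFishburn M) (x y : XM M) :
    StrictNW (cellOf x) (cellOf y) ↔
      ∃ u v : XM M, u ≠ v ∧ u ≠ x ∧ u ≠ y ∧ v ≠ x ∧ v ≠ y ∧ x ≠ y ∧
        Rind u y ∧ Rind u v ∧ Rind x v ∧
        ¬ Rind v u ∧ ¬ Rind u x ∧ ¬ Rind x u ∧ ¬ Rind y u ∧ ¬ Rind v x ∧
        ¬ Rind v y ∧ ¬ Rind y v ∧ ¬ Rind x y ∧ ¬ Rind y x := by
  constructor
  · rintro ⟨⟨hs1, hs2⟩, h1, h2⟩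
    have hs1' : ¬ (x.1.2.1 : ℕ) < y.1.1 := hs1
    have h1' : (x.1.1 : ℕ) < y.1.1 := h1
    have h2' : (x.1.2.1 : ℕ) < y.1.2.1 := h2
    have hxle : (x.1.1 : ℕ) ≤ x.1.2.1 := x.2.1
    have hyle : (y.1.1 : ℕ) ≤ y.1.2.1 := y.2.1
    have hym := y.1.1.isLt
    have hym2 := y.1.2.1.isLt
    have hjm : (y.1.1 : ℕ) - 1 < m := by omega
    have him : (x.1.2.1 : ℕ) + 1 < m := by omega
    obtain ⟨u, huj, hui⟩ := elemOfCol hM ⟨(y.1.1 : ℕ) - 1, hjm⟩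
    obtain ⟨v, hvi, hvj⟩ := elemOfRow hM ⟨(x.1.2.1 : ℕ) + 1, him⟩
    have huj' : (u.1.2.1 : ℕ) = (y.1.1 : ℕ) - 1 := congrArg Fin.val huj
    have hui' : (u.1.1 : ℕ) ≤ u.1.2.1 := u.2.1
    have hvi' : (v.1.1 : ℕ) = (x.1.2.1 : ℕ) + 1 := congrArg Fin.val hvi
    have hvj' : (x.1.2.1 : ℕ) + 1 ≤ v.1.2.1 := hvj
    refine ⟨u, v, ne_of_jval (by omega), ne_of_jval (by omega), ne_of_ival (by omega),
      ne_of_jval (by omega), ne_of_ival (by omega), ne_of_ival (by omega),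
      show (u.1.2.1 : ℕ) < y.1.1 by omega,
      show (u.1.2.1 : ℕ) < v.1.1 by omega,
      show (x.1.2.1 : ℕ) < v.1.1 by omega, ?_, ?_, ?_, ?_, ?_, ?_, ?_, ?_, ?_⟩
    · intro h; have h' : (v.1.2.1 : ℕ) < u.1.1 := h; omega
    · intro h; have h' : (u.1.2.1 : ℕ) < x.1.1 := h; omega
    · intro h; have h' : (x.1.2.1 : ℕ) < u.1.1 := h; omega
    · intro h; have h' : (y.1.2.1 : ℕ) < u.1.1 := h; omega
    · intro h; have h' : (v.1.2.1 : ℕ) < x.1.1 := h; omega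
    · intro h; have h' : (v.1.2.1 : ℕ) < y.1.1 := h; omega
    · intro h; have h' : (y.1.2.1 : ℕ) < v.1.1 := h; omega
    · intro h; have h' : (x.1.2.1 : ℕ) < y.1.1 := h; omega
    · intro h; have h' : (y.1.2.1 : ℕ) < x.1.1 := h; omega
  · rintro ⟨u, v, -, -, -, -, -, -, huy, -, hxv, -, hnux, -, -, -, -, hnyv, hnxy, hnyx⟩
    have h1 : (u.1.2.1 : ℕ) < y.1.1 := huy
    have h2 : (x.1.2.1 : ℕ) < v.1.1 := hxv
    have h3 : ¬ (u.1.2.1 : ℕ) < x.1.1 := hnux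
    have h4 : ¬ (y.1.2.1 : ℕ) < v.1.1 := hnyv
    exact ⟨⟨hnxy, hnyx⟩, show (x.1.1 : ℕ) < y.1.1 by omega,
      show (x.1.2.1 : ℕ) < y.1.2.1 by omega⟩

end Aux


/-- Lemma 2 (lem-swse): characterization of 3+1 and N patterns in an interval order in
terms of strictly SW / strictly NW pairs of cells of its Fishburn matrix. -/
theorem stmt_0 {m : ℕ} (hm : 0 < m) (M : Fin m → Fin m → ℕ) (hM : IsFishburn M)
    (x y : XM M) :
    (StrictSW (cellOf x) (cellOf y) ↔
      ∃ u v : XM M, u ≠ x ∧ u ≠ v ∧ u ≠ y ∧ x ≠ v ∧ x ≠ y ∧ v ≠ y ∧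
        Rind u x ∧ Rind x v ∧ Rind u v ∧
        ¬ Cmp Rind y u ∧ ¬ Cmp Rind y x ∧ ¬ Cmp Rind y v) ∧
    (StrictNW (cellOf x) (cellOf y) ↔
      ∃ u v : XM M, u ≠ v ∧ u ≠ x ∧ u ≠ y ∧ v ≠ x ∧ v ≠ y ∧ x ≠ y ∧
        Rind u y ∧ Rind u v ∧ Rind x v ∧
        ¬ Rind v u ∧ ¬ Rind u x ∧ ¬ Rind x u ∧ ¬ Rind y u ∧ ¬ Rind v x ∧
        ¬ Rind v y ∧ ¬ Rind y v ∧ ¬ Rind x y ∧ ¬ Rind y x) ∧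
    (¬ Contains31 (Rind (M := M)) ↔
      ¬ ∃ c c' : Cell m, NonzeroCell M c ∧ NonzeroCell M c' ∧ c ≠ c' ∧ StrictSW c c') ∧
    (¬ ContainsN (Rind (M := M)) ↔
      ¬ ∃ c c' : Cell m, NonzeroCell M c ∧ NonzeroCell M c' ∧ c ≠ c' ∧ StrictNW c c') := by
  have h31 : Contains31 (Rind (M := M)) ↔
      ∃ c c' : Cell m, NonzeroCell M c ∧ NonzeroCell M c' ∧ c ≠ c' ∧ StrictSW c c' := by
    constructor
    · rintro ⟨a, b, c, d, hab, hac, had, hbc, hbd, hcd, r1, r2, r3, hda, hdb, hdc⟩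
      have hsw : StrictSW (cellOf b) (cellOf d) :=
        (sw_iff hM b d).mpr ⟨a, c, hab, hac, had, hbc, hbd, hcd, r1, r2, r3, hda, hdb, hdc⟩
      refine ⟨cellOf b, cellOf d, ⟨b.2.1, (Nat.zero_lt_of_lt b.2.2).ne'⟩,
        ⟨d.2.1, (Nat.zero_lt_of_lt d.2.2).ne'⟩, ?_, hsw⟩
      intro h
      rw [h] at hsw
      exact lt_irrefl _ hsw.1
    · rintro ⟨c, c', hc, hc', -, hsw⟩
      let xb : XM M := ⟨(c.1, c.2, 0), hc.1, Nat.pos_of_ne_zero hc.2⟩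
      let yd : XM M := ⟨(c'.1, c'.2, 0), hc'.1, Nat.pos_of_ne_zero hc'.2⟩
      have hsw' : StrictSW (cellOf xb) (cellOf yd) := hsw
      obtain ⟨u, v, n1, n2, n3, n4, n5, n6, r1, r2, r3, c1, c2, c3⟩ :=
        (sw_iff hM xb yd).mp hsw'
      exact ⟨u, xb, v, yd, n1, n2, n3, n4, n5, n6, r1, r2, r3, c1, c2, c3⟩
  have hN : ContainsN (Rind (M := M)) ↔
      ∃ c c' : Cell m, NonzeroCell M c ∧ NonzeroCell M c' ∧ c ≠ c' ∧ StrictNW c c' := by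
    constructor
    · rintro ⟨u, v, a, b, n1, n2, n3, n4, n5, n6, r1, r2, r3,
        q1, q2, q3, q4, q5, q6, q7, q8, q9⟩
      have hnw : StrictNW (cellOf a) (cellOf b) :=
        (nw_iff hM a b).mpr ⟨u, v, n1, n2, n3, n4, n5, n6, r2, r1, r3,
          q1, q2, q3, q4, q5, q6, q7, q8, q9⟩
      refine ⟨cellOf a, cellOf b, ⟨a.2.1, (Nat.zero_lt_of_lt a.2.2).ne'⟩,
        ⟨b.2.1, (Nat.zero_lt_of_lt b.2.2).ne'⟩, ?_, hnw⟩
      intro h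
      rw [h] at hnw
      exact lt_irrefl _ hnw.2.1
    · rintro ⟨c, c', hc, hc', -, hnw⟩
      let xb : XM M := ⟨(c.1, c.2, 0), hc.1, Nat.pos_of_ne_zero hc.2⟩
      let yd : XM M := ⟨(c'.1, c'.2, 0), hc'.1, Nat.pos_of_ne_zero hc'.2⟩
      have hnw' : StrictNW (cellOf xb) (cellOf yd) := hnw
      obtain ⟨u, v, n1, n2, n3, n4, n5, n6, r1, r2, r3,
        q1, q2, q3, q4, q5, q6, q7, q8, q9⟩ := (nw_iff hM xb yd).mp hnw'
      exact ⟨u, v, xb, yd, n1, n2, n3, n4, n5, n6, r2, r1, r3,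
        q1, q2, q3, q4, q5, q6, q7, q8, q9⟩
  exact ⟨sw_iff hM x y, nw_iff hM x y, not_congr h31, not_congr hN⟩


end FishburnPaper
end

section
/- Let M be a Fishburn matrix with induced poset R on the set X_M, and suppose (S,R) is a C1-pair on X_M. Then for all distinct x, y ∈ X_M with cells c_x and c_y: (a) if c_x = c_y then x and y are comparable by S; (b) if c_x is weakly SW of c_y then x S y; (c) if c_x ≠ c_y and neither of c_x, c_y is weakly SW of the other, then x and y are not comparable by S. -/
open scoped Classical

namespace FishburnPaper

universe u

/-- Every row of a Fishburn matrix yields an element of `X_M` in that row. -/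
lemma exists_row_elem {m : ℕ} {M : Fin m → Fin m → ℕ} (hM : IsFishburn M) (r : Fin m) :
    ∃ z : XM M, z.1.1 = r := by
  obtain ⟨k, hk⟩ := hM.2.1 r
  have hrk : r ≤ k := by
    by_contra h
    exact hk (hM.1 r k (lt_of_not_ge h))
  exact ⟨⟨(r, k, 0), hrk, Nat.pos_of_ne_zero hk⟩, rfl⟩

/-- Every column of a Fishburn matrix yields an element of `X_M` in that column. -/
lemma exists_col_elem {m : ℕ} {M : Fin m → Fin m → ℕ} (hM : IsFishburn M) (c : Fin m) :
    ∃ z : XM M, z.1.2.1 = c := by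
  obtain ⟨i, hi⟩ := hM.2.2 c
  have hic : i ≤ c := by
    by_contra h
    exact hi (hM.1 i c (lt_of_not_ge h))
  exact ⟨⟨(i, c, 0), hic, Nat.pos_of_ne_zero hi⟩, rfl⟩

lemma Rind_val {m : ℕ} {M : Fin m → Fin m → ℕ} (x y : XM M) :
    Rind x y ↔ (x.1.2.1 : ℕ) < (y.1.1 : ℕ) := Iff.rfl

/-- Key step: if the cell of `x` is strictly NW of the cell of `y` (in the weak sense of
strictly smaller coordinates), then `x` and `y` are not `S`-comparable. -/
lemma key_NW {m : ℕ} {M : Fin m → Fin m → ℕ} (hM : IsFishburn M)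
    {S : XM M → XM M → Prop} (hC1 : IsC1Pair S (Rind (M := M)))
    (x y : XM M) (hxy : x ≠ y)
    (h1 : (x.1.1 : ℕ) < y.1.1) (h2 : (x.1.2.1 : ℕ) < y.1.2.1) :
    ¬ Cmp S x y := by
  obtain ⟨hS, hR, hXor, hC⟩ := hC1
  by_cases hsm : (x.1.2.1 : ℕ) < y.1.1
  · -- cells are R-comparable, so not S-comparable
    intro hcmp
    rcases hXor x y hxy with ⟨_, hnR⟩ | ⟨_, hnS⟩
    · exact hnR (Or.inl hsm)
    · exact hnS hcmp
  · push_neg at hsm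
    have hxx : (x.1.1 : ℕ) ≤ x.1.2.1 := x.2.1
    have hyy : (y.1.1 : ℕ) ≤ y.1.2.1 := y.2.1
    have hnRxy : ¬ Rind x y := by rw [Rind_val]; omega
    have hnRyx : ¬ Rind y x := by rw [Rind_val]; omega
    rintro (hSxy | hSyx)
    · -- S x y: take a witness z in column i_x
      obtain ⟨z, hz⟩ := exists_col_elem hM x.1.1
      have hzz : (z.1.1 : ℕ) ≤ z.1.2.1 := z.2.1
      have hzv : (z.1.2.1 : ℕ) = x.1.1 := by rw [hz]
      have hRzy : Rind z y := by rw [Rind_val]; omega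
      have hzy : z ≠ y := fun h => hR.1 y (h ▸ hRzy)
      have hzx : z ≠ x := by
        intro h
        rw [h] at hzv
        omega
      have hnRzx : ¬ Rind z x := by rw [Rind_val]; omega
      have hnRxz : ¬ Rind x z := by rw [Rind_val]; omega
      rcases hXor z x hzx with ⟨hScmp, _⟩ | ⟨hRcmp, _⟩
      · rcases hScmp with hSzx | hSxz
        · -- S z x, S x y gives S z y, contradicting R z y
          have hSzy : S z y := hS.2 hSzx hSxy
          rcases hXor z y hzy with ⟨_, h⟩ | ⟨_, h⟩
          · exact h (Or.inl hRzy)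
          · exact h (Or.inl hSzy)
        · -- S x z, R z y gives R x y
          exact hnRxy (hC x z y hzx.symm hzy hxy hSxz hRzy)
      · rcases hRcmp with h | h
        · exact hnRzx h
        · exact hnRxz h
    · -- S y x: take a witness z in row j_y
      obtain ⟨z, hz⟩ := exists_row_elem hM y.1.2.1
      have hzv : (z.1.1 : ℕ) = y.1.2.1 := by rw [hz]
      have hRxz : Rind x z := by rw [Rind_val]; omega
      have hxz : x ≠ z := by
        intro h
        subst h
        exact hR.1 x hRxz
      have hyz : y ≠ z := fun h => hnRxy (h ▸ hRxz)
      have hRyz : Rind y z := hC y x z hxy.symm hxz hyz hSyx hRxz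
      rw [Rind_val] at hRyz; omega

/-- Lemma 3 (lem-c1mat): the first component of a C1-pair whose second component is the
poset induced by a Fishburn matrix is determined by the matrix. -/
theorem stmt_1 {m : ℕ} (hm : 0 < m) (M : Fin m → Fin m → ℕ) (hM : IsFishburn M)
    (S : XM M → XM M → Prop) (hC1 : IsC1Pair S (Rind (M := M)))
    (x y : XM M) (hxy : x ≠ y) :
    (cellOf x = cellOf y → Cmp S x y) ∧
    (WeakSW (cellOf x) (cellOf y) → S x y) ∧
    (cellOf x ≠ cellOf y → ¬ WeakSW (cellOf x) (cellOf y) →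
      ¬ WeakSW (cellOf y) (cellOf x) → ¬ Cmp S x y) := by
  have hxx : (x.1.1 : ℕ) ≤ x.1.2.1 := x.2.1
  have hyy : (y.1.1 : ℕ) ≤ y.1.2.1 := y.2.1
  obtain ⟨hS, hR, hXor, hC⟩ := hC1
  refine ⟨?_, ?_, ?_⟩
  · -- (a) same cell ⇒ S-comparable
    intro hc
    have hij : (x.1.1 : ℕ) = y.1.1 ∧ (x.1.2.1 : ℕ) = y.1.2.1 := by
      simpa [cellOf, Prod.ext_iff, Fin.ext_iff] using hc
    have hnR : ¬ Cmp (Rind (M := M)) x y := by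
      rintro (h | h) <;> rw [Rind_val] at h <;> omega
    rcases hXor x y hxy with ⟨h, _⟩ | ⟨h, _⟩
    · exact h
    · exact absurd h hnR
  · -- (b) weak SW ⇒ S x y
    rintro ⟨hne, hle1, hle2⟩
    have hle1 : (y.1.1 : ℕ) ≤ x.1.1 := hle1
    have hle2 : (x.1.2.1 : ℕ) ≤ y.1.2.1 := hle2
    have hne' : ¬((x.1.1 : ℕ) = y.1.1 ∧ (x.1.2.1 : ℕ) = y.1.2.1) := by
      simpa [cellOf, Prod.ext_iff, Fin.ext_iff] using hne
    have hnRxy : ¬ Rind x y := by rw [Rind_val]; omega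
    have hnRyx : ¬ Rind y x := by rw [Rind_val]; omega
    have hScmp : Cmp S x y := by
      rcases hXor x y hxy with ⟨h, _⟩ | ⟨h, _⟩
      · exact h
      · rcases h with h | h
        · exact absurd h hnRxy
        · exact absurd h hnRyx
    rcases hScmp with h | hSyx
    · exact h
    · -- rule out S y x
      exfalso
      by_cases h2 : (x.1.2.1 : ℕ) < y.1.2.1
      · -- witness z in row j_y
        obtain ⟨z, hz⟩ := exists_row_elem hM y.1.2.1
        have hzv : (z.1.1 : ℕ) = y.1.2.1 := by rw [hz]
        have hRxz : Rind x z := by rw [Rind_val]; omega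
        have hxz : x ≠ z := fun h => hR.1 x (h ▸ hRxz)
        have hyz : y ≠ z := fun h => hnRxy (h ▸ hRxz)
        have hRyz : Rind y z := hC y x z hxy.symm hxz hyz hSyx hRxz
        rw [Rind_val] at hRyz; omega
      · -- then i_y < i_x; witness z in column i_y
        have h1 : (y.1.1 : ℕ) < x.1.1 := by omega
        obtain ⟨z, hz⟩ := exists_col_elem hM y.1.1
        have hzz : (z.1.1 : ℕ) ≤ z.1.2.1 := z.2.1
        have hzv : (z.1.2.1 : ℕ) = y.1.1 := by rw [hz]
        have hRzx : Rind z x := by rw [Rind_val]; omega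
        have hzx : z ≠ x := fun h => hR.1 x (h ▸ hRzx)
        have hzy : z ≠ y := by
          intro h
          rw [h] at hzv
          omega
        have hnRzy : ¬ Rind z y := by rw [Rind_val]; omega
        have hnRyz : ¬ Rind y z := by rw [Rind_val]; omega
        rcases hXor z y hzy with ⟨hScmp, _⟩ | ⟨hRcmp, _⟩
        · rcases hScmp with hSzy | hSyz
          · have hSzx : S z x := hS.2 hSzy hSyx
            rcases hXor z x hzx with ⟨_, h⟩ | ⟨_, h⟩
            · exact h (Or.inl hRzx)
            · exact h (Or.inl hSzx)
          · exact hnRyx (hC y z x hzy.symm hzx hxy.symm hSyz hRzx)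
        · rcases hRcmp with h | h
          · exact hnRzy h
          · exact hnRyz h
  · -- (c) incomparable cells ⇒ not S-comparable
    intro hc hW1 hW2
    have hne' : ¬((x.1.1 : ℕ) = y.1.1 ∧ (x.1.2.1 : ℕ) = y.1.2.1) := by
      simpa [cellOf, Prod.ext_iff, Fin.ext_iff] using hc
    have hW1' : ¬((y.1.1 : ℕ) ≤ x.1.1 ∧ (x.1.2.1 : ℕ) ≤ y.1.2.1) := by
      intro ⟨ha, hb⟩
      exact hW1 ⟨hc, ha, hb⟩
    have hW2' : ¬((x.1.1 : ℕ) ≤ y.1.1 ∧ (y.1.2.1 : ℕ) ≤ x.1.2.1) := by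
      intro ⟨ha, hb⟩
      exact hW2 ⟨hc.symm, ha, hb⟩
    rcases (by omega :
        ((x.1.1 : ℕ) < y.1.1 ∧ (x.1.2.1 : ℕ) < y.1.2.1) ∨
        ((y.1.1 : ℕ) < x.1.1 ∧ (y.1.2.1 : ℕ) < x.1.2.1)) with ⟨ha, hb⟩ | ⟨ha, hb⟩
    · exact key_NW hM ⟨hS, hR, hXor, hC⟩ x y hxy ha hb
    · intro hcmp
      exact key_NW hM ⟨hS, hR, hXor, hC⟩ y x hxy.symm ha hb
        (hcmp.elim Or.inr Or.inl)

end FishburnPaper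
end

section
/- If (T,R) is a C2-pair on a finite set X, then R is a strict partial order on X that is (2+2)-free and (3+1)-free. -/
open scoped Classical

namespace FishburnPaper

universe u

/-- Lemma 4 (lem-C2): if `(T,R)` is a C2-pair, then `R` is a (2+2)- and (3+1)-free
strict partial order. -/
theorem stmt_2 {X : Type u} [Finite X] (T R : X → X → Prop) (h : IsC2Pair T R) :
    StrictOrd R ∧ ¬ Contains22 R ∧ ¬ Contains31 R := by
  obtain ⟨hR, hTR, hxor, hp1, hp2⟩ := h
  have cmpT : ∀ x y : X, x ≠ y → ¬ R x y → ¬ R y x → T x y ∨ T y x := by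
    intro x y hne h1 h2
    rcases hxor x y hne with ⟨ht, _⟩ | ⟨hr, _⟩
    · exact ht
    · rcases hr with h | h
      · exact absurd h h1
      · exact absurd h h2
  refine ⟨hR, ?_, ?_⟩
  · rintro ⟨a, b, c, d, hab, hac, had, hbc, hbd, hcd, Rab, Rcd,
      hba, hAC, hCA, hAD, hDA, hBC, hCB, hBD, hDB, hDC⟩
    have hTda : ¬ T d a := by
      intro hda
      have hdb : T d b := ((hTR.2 (Or.inl hda) (Or.inr Rab))).resolve_right hDB
      exact hp1 ⟨d, a, b, had.symm, hab, hbd.symm, hda, hdb, Rab⟩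
    have hTad : T a d := (cmpT a d had hAD hDA).resolve_right hTda
    have hTbc : ¬ T b c := by
      intro hbc'
      have hbd' : T b d := ((hTR.2 (Or.inl hbc') (Or.inr Rcd))).resolve_right hBD
      have had' : T a d := ((hTR.2 (Or.inr Rab) (Or.inl hbd'))).resolve_right hAD
      exact hp2 ⟨d, a, b, had.symm, hab, hbd.symm, had', hbd', Rab⟩
    have hTcb : T c b := (cmpT c b hbc.symm hCB hBC).resolve_right hTbc
    rcases cmpT a c hac hAC hCA with hac' | hca'
    · exact hp1 ⟨a, c, d, hac, hcd, had, hac', hTad, Rcd⟩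
    · exact hp1 ⟨c, a, b, hac.symm, hab, hbc.symm, hca', hTcb, Rab⟩
  · rintro ⟨a, b, c, d, hab, hac, had, hbc, hbd, hcd, Rab, Rbc, Rac, hda, hdb, hdc⟩
    rcases cmpT d b hbd.symm (fun h => hdb (Or.inl h)) (fun h => hdb (Or.inr h))
      with hdb' | hbd'
    · have hdc' : T d c :=
        ((hTR.2 (Or.inl hdb') (Or.inr Rbc))).resolve_right (fun h => hdc (Or.inl h))
      exact hp1 ⟨d, b, c, hbd.symm, hbc, hcd.symm, hdb', hdc', Rbc⟩
    · have had' : T a d :=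
        ((hTR.2 (Or.inr Rab) (Or.inl hbd'))).resolve_right (fun h => hda (Or.inr h))
      exact hp2 ⟨d, a, b, had.symm, hab, hbd.symm, had', hbd', Rab⟩

end FishburnPaper
end

section
/- Let M be a Fishburn matrix having no two distinct nonzero cells with one strictly SW of the other, let R be the induced poset on X_M, and define the relation T on X_M by: x T y if and only if either c_x is weakly NW of c_y, or c_x = c_y and the third coordinates a, b of x, y satisfy a < b. Then (T,R) is a C2-pair on X_M. -/
open scoped Classical

namespace FishburnPaper

universe u

private lemma Tkey {m : ℕ} {M : Fin m → Fin m → ℕ} {x y : XM M}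
    (h : WeakNW (cellOf x) (cellOf y) ∨ (cellOf x = cellOf y ∧ x.1.2.2 < y.1.2.2)) :
    x.1.1 ≤ y.1.1 ∧ x.1.2.1 ≤ y.1.2.1 ∧
      ¬ x.1.2.1 < y.1.1 ∧ ¬ y.1.2.1 < x.1.1 := by
  rcases h with ⟨_, ⟨hs1, hs2⟩, hi, hj⟩ | ⟨hc, _⟩
  · exact ⟨hi, hj, hs1, hs2⟩
  · have h1 : x.1.1 = y.1.1 := (Prod.ext_iff.mp hc).1
    have h2 : x.1.2.1 = y.1.2.1 := (Prod.ext_iff.mp hc).2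
    refine ⟨le_of_eq h1, le_of_eq h2, ?_, ?_⟩
    · rw [← h1]; exact not_lt.2 x.2.1
    · rw [← h2]; exact not_lt.2 x.2.1

private lemma nzCell {m : ℕ} {M : Fin m → Fin m → ℕ} (x : XM M) :
    NonzeroCell M (cellOf x) := by
  refine ⟨x.2.1, fun h => ?_⟩
  have := x.2.2
  simp only [cellOf] at h
  omega

private lemma eqOfCell {m : ℕ} {M : Fin m → Fin m → ℕ} {x y : XM M}
    (hc : cellOf x = cellOf y) (ha : x.1.2.2 = y.1.2.2) : x = y := by
  have h1 : x.1.1 = y.1.1 := (Prod.ext_iff.mp hc).1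
  have h2 : x.1.2.1 = y.1.2.1 := (Prod.ext_iff.mp hc).2
  exact Subtype.ext (Prod.ext_iff.mpr ⟨h1, Prod.ext_iff.mpr ⟨h2, ha⟩⟩)

/-- Lemma 5 (lem-C2enum), first part: the relation `T` built from a Fishburn matrix with
no two nonzero cells in strictly SW position forms a C2-pair with the induced poset. -/
theorem stmt_3 {m : ℕ} (hm : 0 < m) (M : Fin m → Fin m → ℕ) (hM : IsFishburn M)
    (hSW : ¬ ∃ c c' : Cell m, NonzeroCell M c ∧ NonzeroCell M c' ∧ c ≠ c' ∧ StrictSW c c') :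
    IsC2Pair
      (fun x y : XM M =>
        WeakNW (cellOf x) (cellOf y) ∨ (cellOf x = cellOf y ∧ x.1.2.2 < y.1.2.2))
      (Rind (M := M)) := by
  set T : XM M → XM M → Prop := fun x y =>
    WeakNW (cellOf x) (cellOf y) ∨ (cellOf x = cellOf y ∧ x.1.2.2 < y.1.2.2) with hTdef
  have Rirr : ∀ x : XM M, ¬ Rind x x := fun x h => absurd x.2.1 (not_le.2 h)
  have Rtr : ∀ ⦃x y z : XM M⦄, Rind x y → Rind y z → Rind x z :=
    fun x y z h1 h2 => lt_trans (lt_of_lt_of_le h1 y.2.1) h2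
  refine ⟨⟨Rirr, Rtr⟩, ⟨?_, ?_⟩, ?_, ?_, ?_⟩
  · -- irreflexivity of T ∪ R
    rintro x (h | h)
    · rcases h with ⟨hne, _⟩ | ⟨_, ha⟩
      · exact hne rfl
      · exact lt_irrefl _ ha
    · exact Rirr x h
  · -- transitivity of T ∪ R
    rintro x y z (hxy | hxy) (hyz | hyz)
    · obtain ⟨hi1, hj1, hs1, hs1'⟩ := Tkey hxy
      obtain ⟨hi2, hj2, hs2, hs2'⟩ := Tkey hyz
      by_cases hR : x.1.2.1 < z.1.1
      · exact Or.inr hR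
      by_cases hcz : cellOf x = cellOf z
      · have h1 : x.1.1 = z.1.1 := (Prod.ext_iff.mp hcz).1
        have h2 : x.1.2.1 = z.1.2.1 := (Prod.ext_iff.mp hcz).2
        have hcy : cellOf x = cellOf y :=
          Prod.ext_iff.mpr ⟨le_antisymm hi1 (le_of_le_of_eq hi2 h1.symm),
            le_antisymm hj1 (le_of_le_of_eq hj2 h2.symm)⟩
        have hcyz : cellOf y = cellOf z := hcy ▸ hcz
        rcases hxy with ⟨hne, _⟩ | ⟨_, ha1⟩
        · exact absurd hcy hne
        rcases hyz with ⟨hne, _⟩ | ⟨_, ha2⟩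
        · exact absurd hcyz hne
        · exact Or.inl (Or.inr ⟨hcz, lt_trans ha1 ha2⟩)
      · refine Or.inl (Or.inl ⟨hcz, ⟨hR, not_lt.2 ?_⟩, le_trans hi1 hi2, le_trans hj1 hj2⟩)
        exact le_trans x.2.1 (le_trans hj1 hj2)
    · exact Or.inr (lt_of_le_of_lt (Tkey hxy).2.1 hyz)
    · exact Or.inr (lt_of_lt_of_le hxy (Tkey hyz).1)
    · exact Or.inr (Rtr hxy hyz)
  · -- trichotomy
    intro x y hxy
    have hnotboth : ¬ (Cmp T x y ∧ Cmp Rind x y) := by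
      rintro ⟨hT, hR⟩
      have key : ¬ x.1.2.1 < y.1.1 ∧ ¬ y.1.2.1 < x.1.1 := by
        rcases hT with hT | hT
        · exact ⟨(Tkey hT).2.2.1, (Tkey hT).2.2.2⟩
        · exact ⟨(Tkey hT).2.2.2, (Tkey hT).2.2.1⟩
      rcases hR with hR | hR
      · exact key.1 hR
      · exact key.2 hR
    by_cases hr : Cmp Rind x y
    · exact Or.inr ⟨hr, fun ht => hnotboth ⟨ht, hr⟩⟩
    · refine Or.inl ⟨?_, fun hr' => hr hr'⟩
      have hnr1 : ¬ x.1.2.1 < y.1.1 := fun h => hr (Or.inl h)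
      have hnr2 : ¬ y.1.2.1 < x.1.1 := fun h => hr (Or.inr h)
      by_cases hc : cellOf x = cellOf y
      · have ha : x.1.2.2 ≠ y.1.2.2 := fun h => hxy (eqOfCell hc h)
        rcases lt_or_gt_of_ne ha with h | h
        · exact Or.inl (Or.inr ⟨hc, h⟩)
        · exact Or.inr (Or.inr ⟨hc.symm, h⟩)
      · by_cases h1 : x.1.1 ≤ y.1.1 ∧ x.1.2.1 ≤ y.1.2.1
        · exact Or.inl (Or.inl ⟨hc, ⟨hnr1, hnr2⟩, h1.1, h1.2⟩)
        by_cases h2 : y.1.1 ≤ x.1.1 ∧ y.1.2.1 ≤ x.1.2.1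
        · exact Or.inr (Or.inl ⟨fun h => hc h.symm, ⟨hnr2, hnr1⟩, h2.1, h2.2⟩)
        exfalso
        have hv1 : ¬ (x.1.1.val ≤ y.1.1.val ∧ x.1.2.1.val ≤ y.1.2.1.val) := by
          rw [← Fin.le_def, ← Fin.le_def]; exact h1
        have hv2 : ¬ (y.1.1.val ≤ x.1.1.val ∧ y.1.2.1.val ≤ x.1.2.1.val) := by
          rw [← Fin.le_def, ← Fin.le_def]; exact h2
        have hcase : (y.1.1.val < x.1.1.val ∧ x.1.2.1.val < y.1.2.1.val) ∨
            (x.1.1.val < y.1.1.val ∧ y.1.2.1.val < x.1.2.1.val) := by omega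
        rcases hcase with ⟨ha, hb⟩ | ⟨ha, hb⟩
        · exact hSW ⟨cellOf x, cellOf y, nzCell x, nzCell y, hc,
            Fin.lt_def.mpr ha, Fin.lt_def.mpr hb⟩
        · exact hSW ⟨cellOf y, cellOf x, nzCell y, nzCell x, fun h => hc h.symm,
            Fin.lt_def.mpr ha, Fin.lt_def.mpr hb⟩
  · -- pattern 1
    rintro ⟨x, y, z, _, _, _, hTxy, hTxz, hRyz⟩
    exact (Tkey hTxz).2.2.1 (lt_of_le_of_lt (Tkey hTxy).2.1 hRyz)
  · -- pattern 2
    rintro ⟨x, y, z, _, _, _, hTyx, hTzx, hRyz⟩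
    exact (Tkey hTyx).2.2.1 (lt_of_lt_of_le hRyz (Tkey hTzx).1)

end FishburnPaper
end

section
/- If (T,R) and (T',R) are two C2-pairs on the same finite set X having the same second component R, then (T,R) and (T',R) are isomorphic relational structures, i.e., there is a bijection f : X → X such that for all x,y ∈ X, x T y iff f(x) T' f(y), and x R y iff f(x) R f(y). -/
open scoped Classical

namespace FishburnPaper

universe u

/-!
Call `x` and `y` twins when they have the same strict down-set and up-set in `R`. For
`R`-incomparable elements that are not twins, the two forbidden patterns force the direction
of `T` from `R` alone: `T x y` holds iff some `z` lies below `y` but not below `x`, or above `x`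
but not above `y`. Twins are `R`-incomparable, so `T` totally orders every twin class. Hence
`T` and `T'` agree except inside twin classes, and matching the `T`-order with the `T'`-order
on each finite twin class gives the isomorphism.
-/

theorem Finite.nonempty_relIso_of_isStrictTotalOrder {α : Type*} [Finite α]
    (r s : α → α → Prop) [IsStrictTotalOrder α r] [IsStrictTotalOrder α s] :
    Nonempty (r ≃r s) := by
  have : IsWellOrder α r := { wf := Finite.wellFounded_of_trans_of_irrefl r }
  have : IsWellOrder α s := { wf := Finite.wellFounded_of_trans_of_irrefl s }
  have := Fintype.ofFinite α
  exact Ordinal.type_eq.1 (by rw [Ordinal.type_fintype, Ordinal.type_fintype])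

theorem exists_equiv_fiberwise_relIso {α γ : Type*} [Finite α] (g : α → γ)
    (r s : α → α → Prop)
    (hr : ∀ c, IsStrictTotalOrder {a // g a = c} (fun a b => r a b))
    (hs : ∀ c, IsStrictTotalOrder {a // g a = c} (fun a b => s a b)) :
    ∃ e : α ≃ α, (∀ a, g (e a) = g a) ∧ ∀ a b, g a = g b → (r a b ↔ s (e a) (e b)) := by
  have φ c : (fun a b : {a // g a = c} => r a b) ≃r (fun a b : {a // g a = c} => s a b) :=
    have := hr c; have := hs c; (Finite.nonempty_relIso_of_isStrictTotalOrder _ _).some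
  let e : α ≃ α := Equiv.ofFiberEquiv fun c => (φ c).toEquiv
  have e_apply a c (hc : g a = c) : e a = (φ c ⟨a, hc⟩).1 := by subst hc; rfl
  refine ⟨e, Equiv.ofFiberEquiv_map _, fun a b hab => ?_⟩
  rw [e_apply a (g a) rfl, e_apply b (g a) hab.symm]
  exact ((φ (g a)).map_rel_iff (a := ⟨a, rfl⟩) (b := ⟨b, hab.symm⟩)).symm

section C2Pair

variable {X : Type u} {T R : X → X → Prop} {x y : X}

def downUpSets (R : X → X → Prop) (x : X) : (X → Prop) × (X → Prop) := (fun z => R z x, R x)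

theorem downUpSets_eq_iff :
    downUpSets R x = downUpSets R y ↔ (∀ z, R z x ↔ R z y) ∧ ∀ z, R x z ↔ R y z := by
  simp only [downUpSets, Prod.mk.injEq, funext_iff, eq_iff_iff]

def Precedes (R : X → X → Prop) (x y : X) : Prop :=
  ¬ R x y ∧ ¬ R y x ∧ ((∃ z, R z y ∧ ¬ R z x) ∨ ∃ z, R x z ∧ ¬ R y z)

theorem rel_congr_of_downUpSets_eq {x' y' : X} (hx : downUpSets R x = downUpSets R x')
    (hy : downUpSets R y = downUpSets R y') : R x y ↔ R x' y' :=
  ((downUpSets_eq_iff.1 hx).2 y).trans ((downUpSets_eq_iff.1 hy).1 x')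

theorem precedes_congr_of_downUpSets_eq {x' y' : X} (hx : downUpSets R x = downUpSets R x')
    (hy : downUpSets R y = downUpSets R y') : Precedes R x y ↔ Precedes R x' y' := by
  rw [downUpSets_eq_iff] at hx hy
  simp only [Precedes, hx.1, hx.2, hy.1, hy.2]

namespace IsC2Pair

theorem irrefl (h : IsC2Pair T R) : ¬ T x x :=
  fun hT => h.2.1.1 x (Or.inl hT)

theorem asymm (h : IsC2Pair T R) (hT : T x y) : ¬ T y x :=
  fun hT' => h.2.1.1 x (h.2.1.2 (Or.inl hT) (Or.inl hT'))

theorem cmp_iff_not_cmp (h : IsC2Pair T R) (hne : x ≠ y) : Cmp T x y ↔ ¬ Cmp R x y :=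
  xor_iff_iff_not.1 (h.2.2.1 x y hne)

theorem not_rel_and_not_rel (h : IsC2Pair T R) (hT : T x y) : ¬ R x y ∧ ¬ R y x := by
  have hne : x ≠ y := by rintro rfl; exact h.irrefl hT
  exact not_or.1 ((h.cmp_iff_not_cmp hne).1 (Or.inl hT))

theorem rel_or_rel (h : IsC2Pair T R) (hne : x ≠ y) (hxy : ¬ R x y) (hyx : ¬ R y x) :
    T x y ∨ T y x :=
  (h.cmp_iff_not_cmp hne).2 (by rintro (hR | hR) <;> contradiction)

theorem rel_of_below (h : IsC2Pair T R) {z : X} (hne : x ≠ y) (hxy : ¬ R x y)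
    (hyx : ¬ R y x) (hzy : R z y) (hzx : ¬ R z x) : T x y := by
  refine (h.rel_or_rel hne hxy hyx).resolve_right fun hTyx => ?_
  have hxz : x ≠ z := by rintro rfl; exact hxy hzy
  have hzy' : z ≠ y := by rintro rfl; exact h.1.1 z hzy
  rcases h.rel_or_rel hxz (fun hRxz => hxy (h.1.2 hRxz hzy)) hzx with hTxz | hTzx
  · exact h.2.1.1 y (h.2.1.2 (h.2.1.2 (Or.inl hTyx) (Or.inl hTxz)) (Or.inr hzy))
  · exact h.2.2.2.2 ⟨x, z, y, hxz, hzy', hne, hTzx, hTyx, hzy⟩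

theorem rel_of_above (h : IsC2Pair T R) {z : X} (hne : x ≠ y) (hxy : ¬ R x y)
    (hyx : ¬ R y x) (hxz : R x z) (hyz : ¬ R y z) : T x y := by
  refine (h.rel_or_rel hne hxy hyx).resolve_right fun hTyx => ?_
  have hyz' : y ≠ z := by rintro rfl; exact hxy hxz
  have hxz' : x ≠ z := by rintro rfl; exact h.1.1 x hxz
  rcases h.rel_or_rel hyz' hyz (fun hRzy => hxy (h.1.2 hxz hRzy)) with hTyz | hTzy
  · exact h.2.2.2.1 ⟨y, x, z, hne.symm, hxz', hyz', hTyx, hTyz, hxz⟩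
  · exact h.2.1.1 z (h.2.1.2 (h.2.1.2 (Or.inl hTzy) (Or.inl hTyx)) (Or.inr hxz))

theorem rel_iff_precedes (h : IsC2Pair T R) (hne : downUpSets R x ≠ downUpSets R y) :
    T x y ↔ Precedes R x y := by
  have hxy : x ≠ y := ne_of_apply_ne _ hne
  constructor
  · intro hT
    obtain ⟨hRxy, hRyx⟩ := h.not_rel_and_not_rel hT
    refine ⟨hRxy, hRyx, ?_⟩
    by_contra! hno
    apply hne
    rw [downUpSets_eq_iff]
    refine ⟨fun z => ⟨fun hzx => ?_, hno.1 z⟩, fun z => ⟨hno.2 z, fun hyz => ?_⟩⟩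
    · by_contra hzy
      exact h.asymm hT (h.rel_of_below hxy.symm hRyx hRxy hzx hzy)
    · by_contra hxz
      exact h.asymm hT (h.rel_of_above hxy.symm hRyx hRxy hyz hxz)
  · rintro ⟨hRxy, hRyx, ⟨z, hzy, hzx⟩ | ⟨z, hxz, hyz⟩⟩
    · exact h.rel_of_below hxy hRxy hRyx hzy hzx
    · exact h.rel_of_above hxy hRxy hRyx hxz hyz

theorem not_rel_of_downUpSets_eq (h : IsC2Pair T R) (hxy : downUpSets R x = downUpSets R y) :
    ¬ R x y :=
  fun hR => h.1.1 x (((downUpSets_eq_iff.1 hxy).1 x).2 hR)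

theorem isStrictTotalOrder_fiber (h : IsC2Pair T R) (c : (X → Prop) × (X → Prop)) :
    IsStrictTotalOrder {x // downUpSets R x = c} (fun a b => T a b) where
  irrefl _ := h.irrefl
  trans a b d hab hbd := (h.2.1.2 (Or.inl hab) (Or.inl hbd)).resolve_right
    (h.not_rel_of_downUpSets_eq (a.2.trans d.2.symm))
  trichotomous a b hab hba := by
    by_contra hne
    have hne' : a.1 ≠ b.1 := fun e => hne (Subtype.ext e)
    have hc : downUpSets R a.1 = downUpSets R b.1 := a.2.trans b.2.symm
    exact (h.rel_or_rel hne' (h.not_rel_of_downUpSets_eq hc)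
      (h.not_rel_of_downUpSets_eq hc.symm)).elim hab hba

end IsC2Pair

end C2Pair

/-- Lemma 5 (lem-C2enum), uniqueness: two C2-pairs with the same second component are
isomorphic relational structures. -/
theorem stmt_4 {X : Type u} [Finite X] (T T' R : X → X → Prop)
    (h : IsC2Pair T R) (h' : IsC2Pair T' R) :
    ∃ f : X ≃ X, ∀ x y : X, (T x y ↔ T' (f x) (f y)) ∧ (R x y ↔ R (f x) (f y)) := by
  obtain ⟨f, hf, hfT⟩ := exists_equiv_fiberwise_relIso (downUpSets R) T T'
    h.isStrictTotalOrder_fiber h'.isStrictTotalOrder_fiber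
  refine ⟨f, fun x y => ⟨?_, rel_congr_of_downUpSets_eq (hf x).symm (hf y).symm⟩⟩
  by_cases hxy : downUpSets R x = downUpSets R y
  · exact hfT x y hxy
  · have hfxy : downUpSets R (f x) ≠ downUpSets R (f y) := by rwa [hf, hf]
    rw [h.rel_iff_precedes hxy, h'.rel_iff_precedes hfxy]
    exact precedes_congr_of_downUpSets_eq (hf x).symm (hf y).symm

end FishburnPaper
end

section
/- For every natural number n, the number of isomorphism classes of C2-pairs on the set {1,…,n} equals the n-th Catalan number C_n = (1/(n+1))·binom(2n,n). -/
/-!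
Since `T ∪ R` is a strict total order, every C2-pair on `Fin n` is isomorphic to one whose union
is `<`. For such a pair `T` is the complement of `R` among the pairs `a < b`, and the two
forbidden patterns say exactly that `R a b` is inherited by smaller `a` and by larger `b`. Hence
`R a b ↔ a < f b` for a monotone `f` with `f b ≤ b`, and the only order automorphism of `Fin n`
being the identity, distinct such `f` give non-isomorphic pairs. These staircases are counted by
the Catalan numbers: cutting at the least `i` with `f (i + 1) = i + 1` splits a staircase of
size `n + 1` into one of size `i` and one of size `n - i`, which is the recursion `catalan_succ`.
-/

open scoped Classical

namespace FishburnPaper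

universe u

theorem exists_equiv_fin_lt_iff {X : Type*} [Fintype X] {n : ℕ} (hX : Fintype.card X = n)
    (P : X → X → Prop) [IsStrictTotalOrder X P] : ∃ E : X ≃ Fin n, ∀ x y, P x y ↔ E x < E y := by
  let := linearOrderOfSTO P
  exact ⟨(Fintype.orderIsoFinOfCardEq X hX).symm.toEquiv, fun _ _ =>
    (Fintype.orderIsoFinOfCardEq X hX).symm.lt_iff_lt.symm⟩

theorem mem_iff_lt_card_of_isLowerSet {n : ℕ} {S : Finset (Fin n)}
    (hS : IsLowerSet (S : Set (Fin n))) (i : Fin n) : i ∈ S ↔ (i : ℕ) < S.card := by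
  constructor
  · intro hi
    have := Finset.card_le_card fun a ha => hS (Finset.mem_Iic.1 ha) hi
    rw [Fin.card_Iic] at this
    omega
  · intro hi
    by_contra hni
    have := Finset.card_le_card fun s hs =>
      Finset.mem_Iio.2 (lt_of_not_ge fun his => hni (hS his hs))
    rw [Fin.card_Iio] at this
    omega

theorem cmp_comm {X : Type*} (Q : X → X → Prop) (x y : X) : Cmp Q x y ↔ Cmp Q y x := or_comm

theorem cmp_iff_of_lt {α : Type*} [Preorder α] {Q : α → α → Prop} (hQ : ∀ x y, Q x y → x < y)
    {x y : α} (h : x < y) : Cmp Q x y ↔ Q x y :=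
  or_iff_left fun h' => (hQ y x h').not_gt h

namespace IsC2Pair

section

variable {X : Type*} {T R : X → X → Prop}

theorem isStrictTotalOrder (h : IsC2Pair T R) :
    IsStrictTotalOrder X (fun x y => T x y ∨ R x y) where
  irrefl := h.2.1.1
  trans a b c := @h.2.1.2 a b c
  trichotomous a b hab hba := by
    by_contra hne
    rcases h.2.2.1 a b hne with ⟨hT | hT, -⟩ | ⟨hR | hR, -⟩
    exacts [hab (.inl hT), hba (.inl hT), hab (.inr hR), hba (.inr hR)]

theorem comap (h : IsC2Pair T R) {Y : Type*} {e : Y → X} (he : Function.Injective e) :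
    IsC2Pair (fun a b => T (e a) (e b)) (fun a b => R (e a) (e b)) := by
  obtain ⟨⟨hRirr, hRtrans⟩, ⟨hPirr, hPtrans⟩, hxor, hpat, hpat'⟩ := h
  refine ⟨⟨fun x => hRirr _, fun _ _ _ => @hRtrans _ _ _⟩,
    ⟨fun x => hPirr _, fun _ _ _ => @hPtrans _ _ _⟩,
    fun x y hxy => hxor _ _ (he.ne hxy), ?_, ?_⟩
  · rintro ⟨x, y, z, hxy, hyz, hxz, hw⟩
    exact hpat ⟨e x, e y, e z, he.ne hxy, he.ne hyz, he.ne hxz, hw⟩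
  · rintro ⟨x, y, z, hxy, hyz, hxz, hw⟩
    exact hpat' ⟨e x, e y, e z, he.ne hxy, he.ne hyz, he.ne hxz, hw⟩

end

section LinearOrder

variable {α : Type*} [LinearOrder α] {T R : α → α → Prop}

theorem t_iff_not_r (h : IsC2Pair T R) (hTR : ∀ x y, T x y ∨ R x y ↔ x < y) {a b : α}
    (hab : a < b) : T a b ↔ ¬ R a b := by
  have hxor := h.2.2.1 a b hab.ne
  rw [cmp_iff_of_lt (fun x y hT => (hTR x y).1 (.inl hT)) hab,
    cmp_iff_of_lt (fun x y hR => (hTR x y).1 (.inr hR)) hab] at hxor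
  exact xor_iff_iff_not.1 hxor

theorem r_of_lt_of_r (h : IsC2Pair T R) (hTR : ∀ x y, T x y ∨ R x y ↔ x < y) {a' a b : α}
    (ha : a' < a) (hR : R a b) : R a' b := by
  have hab := (hTR a b).1 (.inr hR)
  by_contra hnR
  have hTa'b := (h.t_iff_not_r hTR (ha.trans hab)).2 hnR
  have hTa'a := (h.t_iff_not_r hTR ha).2 fun hR' => hnR (h.1.2 hR' hR)
  exact h.2.2.2.1 ⟨a', a, b, ha.ne, hab.ne, (ha.trans hab).ne, hTa'a, hTa'b, hR⟩

theorem r_of_r_of_lt (h : IsC2Pair T R) (hTR : ∀ x y, T x y ∨ R x y ↔ x < y) {a b b' : α}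
    (hR : R a b) (hb : b < b') : R a b' := by
  have hab := (hTR a b).1 (.inr hR)
  by_contra hnR
  have hTab' := (h.t_iff_not_r hTR (hab.trans hb)).2 hnR
  have hTbb' := (h.t_iff_not_r hTR hb).2 fun hR' => hnR (h.1.2 hR hR')
  exact h.2.2.2.2 ⟨b', a, b, (hab.trans hb).ne', hab.ne, hb.ne', hTab', hTbb', hR⟩

end LinearOrder

end IsC2Pair

theorem isoC2_equivalence (n : ℕ) : Equivalence (isoC2 (n := n)) where
  refl _ := ⟨Equiv.refl _, fun _ _ => ⟨Iff.rfl, Iff.rfl⟩⟩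
  symm := by
    rintro p q ⟨E, hE⟩
    refine ⟨E.symm, fun x y => ?_⟩
    simpa only [Equiv.apply_symm_apply, Iff.comm] using hE (E.symm x) (E.symm y)
  trans := by
    rintro p q r ⟨E, hE⟩ ⟨F, hF⟩
    exact ⟨E.trans F, fun x y =>
      ⟨(hE x y).1.trans (hF (E x) (E y)).1, (hE x y).2.trans (hF (E x) (E y)).2⟩⟩

/-- Values from `n` on are pinned to the identity, so that shifting a staircase (as in
`Staircase.upper`) needs no case split at the end. -/
structure Staircase (n : ℕ) where
  toFun : ℕ → ℕ
  monotone' : Monotone toFun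
  le_self' : ∀ j, toFun j ≤ j
  eq_self_of_le' : ∀ j, n ≤ j → toFun j = j

namespace Staircase

variable {n : ℕ}

instance : CoeFun (Staircase n) (fun _ => ℕ → ℕ) := ⟨toFun⟩

theorem monotone (f : Staircase n) : Monotone f := f.monotone'

theorem le_self (f : Staircase n) (j : ℕ) : f j ≤ j := f.le_self' j

theorem eq_self_of_le (f : Staircase n) {j : ℕ} (hj : n ≤ j) : f j = j := f.eq_self_of_le' j hj

theorem apply_zero (f : Staircase n) : f 0 = 0 := Nat.le_zero.1 (f.le_self 0)

@[ext]
theorem ext {f g : Staircase n} (h : ∀ j, f j = g j) : f = g := by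
  cases f
  cases g
  congr
  exact funext h

instance : Finite (Staircase n) := by
  refine Finite.of_injective
    (fun f (j : Fin n) => (⟨f j, (f.le_self j).trans_lt j.isLt⟩ : Fin n)) fun f g h => ?_
  ext j
  by_cases hj : j < n
  · exact congrArg Fin.val (congrFun h ⟨j, hj⟩)
  · rw [f.eq_self_of_le (not_lt.1 hj), g.eq_self_of_le (not_lt.1 hj)]

noncomputable instance : Fintype (Staircase n) := Fintype.ofFinite _

def ofFin (g : Fin n → ℕ) (hmono : Monotone g) (hle : ∀ j, g j ≤ j) : Staircase n where
  toFun j := if h : j < n then g ⟨j, h⟩ else j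
  monotone' s t hst := by
    dsimp only
    by_cases ht : t < n
    · rw [dif_pos (hst.trans_lt ht), dif_pos ht]
      exact hmono hst
    · rw [dif_neg ht]
      split_ifs with hs
      exacts [(hle _).trans hst, hst]
  le_self' j := by
    split_ifs
    exacts [hle _, le_rfl]
  eq_self_of_le' j hj := dif_neg (not_lt.2 hj)

theorem ofFin_apply (g : Fin n → ℕ) (hmono : Monotone g) (hle : ∀ j, g j ≤ j) (j : Fin n) :
    ofFin g hmono hle j = g j :=
  dif_pos j.isLt

def relR (f : Staircase n) (x y : Fin n) : Prop := (x : ℕ) < f y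

def relT (f : Staircase n) (x y : Fin n) : Prop := x < y ∧ ¬ f.relR x y

theorem lt_of_relR {f : Staircase n} {x y : Fin n} (h : f.relR x y) : x < y :=
  Fin.lt_def.2 (lt_of_lt_of_le h (f.le_self y))

theorem relT_or_relR_iff (f : Staircase n) (x y : Fin n) : f.relT x y ∨ f.relR x y ↔ x < y := by
  refine ⟨fun h => h.elim And.left lt_of_relR, fun h => ?_⟩
  by_cases hR : f.relR x y
  exacts [.inr hR, .inl ⟨h, hR⟩]

theorem isC2Pair (f : Staircase n) : IsC2Pair f.relT f.relR := by
  have hT : ∀ x y, f.relT x y → x < y := fun x y h => h.1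
  have hR : ∀ x y, f.relR x y → x < y := fun x y => lt_of_relR
  have hxor : ∀ x y : Fin n, x < y → Xor (Cmp f.relT x y) (Cmp f.relR x y) := fun x y h => by
    rw [cmp_iff_of_lt hT h, cmp_iff_of_lt hR h]
    exact xor_iff_iff_not.2 (and_iff_right h)
  refine ⟨⟨fun x h => (lt_of_relR h).false, fun x y z hxy hyz => ?_⟩,
    ⟨fun x h => ((f.relT_or_relR_iff x x).1 h).false, fun x y z hxy hyz => ?_⟩,
    fun x y hne => ?_, ?_, ?_⟩
  · exact lt_of_lt_of_le hxy ((f.le_self y).trans (le_of_lt hyz))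
  · simp only [relT_or_relR_iff] at *
    exact hxy.trans hyz
  · rcases hne.lt_or_gt with h | h
    · exact hxor x y h
    · rw [cmp_comm f.relT, cmp_comm f.relR]
      exact hxor y x h
  · rintro ⟨x, y, z, -, -, -, hxy, hxz, hyz⟩
    exact hxz.2 (lt_trans (Fin.lt_def.1 hxy.1) hyz)
  · rintro ⟨x, y, z, -, -, -, hyx, hzx, hyz⟩
    exact hyx.2 (lt_of_lt_of_le hyz (f.monotone hzx.1.le))

def toC2Pair (f : Staircase n) : C2PairsOn n := ⟨(f.relT, f.relR), f.isC2Pair⟩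

theorem ext_of_relR_iff {f g : Staircase n} (h : ∀ x y, f.relR x y ↔ g.relR x y) : f = g := by
  ext j
  by_cases hj : j < n
  · have hf := (f.le_self j).trans_lt hj
    have hg := (g.le_self j).trans_lt hj
    refine le_antisymm (not_lt.1 fun hlt => ?_) (not_lt.1 fun hlt => ?_)
    · exact (lt_irrefl (g j)) ((h ⟨g j, hg⟩ ⟨j, hj⟩).1 hlt)
    · exact (lt_irrefl (f j)) ((h ⟨f j, hf⟩ ⟨j, hj⟩).2 hlt)
  · rw [f.eq_self_of_le (not_lt.1 hj), g.eq_self_of_le (not_lt.1 hj)]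

theorem exists_relR_iff {R : Fin n → Fin n → Prop} (hlt : ∀ a b, R a b → a < b)
    (hdown : ∀ a' a b, a' < a → R a b → R a' b) (hup : ∀ a b b', R a b → b < b' → R a b') :
    ∃ f : Staircase n, ∀ a b, R a b ↔ f.relR a b := by
  let below (b : Fin n) : Finset (Fin n) := Finset.univ.filter (R · b)
  have hbelow (b : Fin n) : IsLowerSet (below b : Set (Fin n)) := fun a a' ha' ha => by
    simp only [below, Finset.coe_filter, Finset.mem_univ, true_and, Set.mem_ofPred_eq] at ha ⊢
    rcases ha'.lt_or_eq with h | rfl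
    exacts [hdown a' a b h ha, ha]
  have hmono : Monotone fun b => (below b).card := fun b b' hb =>
    Finset.card_le_card fun a ha => by
      simp only [below, Finset.mem_filter, Finset.mem_univ, true_and] at ha ⊢
      rcases hb.lt_or_eq with h | rfl
      exacts [hup a b b' ha h, ha]
  have hle (b : Fin n) : (below b).card ≤ b := by
    simpa using Finset.card_le_card fun a (ha : a ∈ below b) =>
      Finset.mem_Iio.2 (hlt a b (Finset.mem_filter.1 ha).2)
  refine ⟨ofFin _ hmono hle, fun a b => ?_⟩
  rw [relR, ofFin_apply, ← mem_iff_lt_card_of_isLowerSet (hbelow b)]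
  simp [below]

def c2Class (f : Staircase n) : Quot (isoC2 (n := n)) := Quot.mk _ f.toC2Pair

theorem c2Class_injective : Function.Injective (c2Class (n := n)) := by
  intro f g hfg
  obtain ⟨E, hE⟩ := (isoC2_equivalence n).eqvGen_iff.1 (Quot.eqvGen_exact hfg)
  have hE_mono : StrictMono E := fun a b hab =>
    (g.relT_or_relR_iff _ _).1 (((f.relT_or_relR_iff a b).2 hab).imp (hE a b).1.1 (hE a b).2.1)
  have hE_id (x : Fin n) : E x = x :=
    congrArg (· x) (Subsingleton.elim (hE_mono.orderIsoOfSurjective E E.surjective) (.refl _))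
  refine ext_of_relR_iff fun x y => ?_
  have hR := (hE x y).2
  rwa [hE_id, hE_id] at hR

theorem c2Class_surjective : Function.Surjective (c2Class (n := n)) := by
  rintro ⟨⟨T, R⟩, hp⟩
  have := hp.isStrictTotalOrder
  obtain ⟨E, hE⟩ := exists_equiv_fin_lt_iff (Fintype.card_fin n) fun x y => T x y ∨ R x y
  have hq := hp.comap E.symm.injective
  have hqTR (a b : Fin n) : T (E.symm a) (E.symm b) ∨ R (E.symm a) (E.symm b) ↔ a < b := by
    simpa only [Equiv.apply_symm_apply] using hE (E.symm a) (E.symm b)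
  obtain ⟨f, hf⟩ := exists_relR_iff (fun a b h => (hqTR a b).1 (.inr h))
    (fun _ _ _ => hq.r_of_lt_of_r hqTR) (fun _ _ _ => hq.r_of_r_of_lt hqTR)
  refine ⟨f, Quot.sound ⟨E.symm, fun x y => ⟨?_, (hf x y).symm⟩⟩⟩
  show x < y ∧ ¬ f.relR x y ↔ T (E.symm x) (E.symm y)
  rw [← hf]
  exact ⟨fun h => (hq.t_iff_not_r hqTR h.1).2 h.2,
    fun h => ⟨(hqTR x y).1 (.inl h), (hq.t_iff_not_r hqTR ((hqTR x y).1 (.inl h))).1 h⟩⟩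

noncomputable def firstReturn (f : Staircase (n + 1)) : Fin (n + 1) :=
  ⟨Nat.find (⟨n, f.eq_self_of_le le_rfl⟩ : ∃ i, f (i + 1) = i + 1),
    Nat.lt_succ_of_le (Nat.find_min' _ (f.eq_self_of_le le_rfl))⟩

theorem firstReturn_eq_iff {f : Staircase (n + 1)} {i : Fin (n + 1)} :
    f.firstReturn = i ↔ f (i + 1) = i + 1 ∧ ∀ t < (i : ℕ), f (t + 1) ≤ t := by
  have hle (t : ℕ) : f (t + 1) ≠ t + 1 ↔ f (t + 1) ≤ t := by
    have := f.le_self (t + 1)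
    omega
  simp only [firstReturn, Fin.ext_iff, Nat.find_eq_iff, ← hle]

def lower (f : Staircase (n + 1)) {i : ℕ} (hbefore : ∀ t < i, f (t + 1) ≤ t) : Staircase i where
  toFun t := if t < i then f (t + 1) else t
  monotone' s t hst := by
    dsimp only
    split_ifs with hs ht ht
    · exact f.monotone (Nat.succ_le_succ hst)
    · exact (hbefore s hs).trans hst
    · omega
    · exact hst
  le_self' t := by
    split_ifs with ht
    exacts [hbefore t ht, le_rfl]
  eq_self_of_le' t ht := if_neg (not_lt.2 ht)

def upper (f : Staircase (n + 1)) (i : ℕ) : Staircase (n - i) where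
  toFun t := f (t + i + 1) - (i + 1)
  monotone' s t hst := Nat.sub_le_sub_right (f.monotone (by omega)) _
  le_self' t := by
    have := f.le_self (t + i + 1)
    omega
  eq_self_of_le' t ht := by
    rw [f.eq_self_of_le (by omega)]
    omega

/-- At `j = 0` the truncated `j - 1` gives `g 0 = 0`. -/
def join {i : ℕ} (hi : i ≤ n) (g : Staircase i) (h : Staircase (n - i)) : Staircase (n + 1) where
  toFun j := if j ≤ i then g (j - 1) else h (j - (i + 1)) + (i + 1)
  monotone' s t hst := by
    dsimp only
    split_ifs with hs ht ht
    · exact g.monotone (Nat.sub_le_sub_right hst 1)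
    · have := g.le_self (s - 1)
      omega
    · omega
    · exact Nat.add_le_add_right (h.monotone (Nat.sub_le_sub_right hst _)) _
  le_self' j := by
    split_ifs
    · exact (g.le_self _).trans (Nat.sub_le j 1)
    · have := h.le_self (j - (i + 1))
      omega
  eq_self_of_le' j hj := by
    rw [if_neg (by omega), h.eq_self_of_le (by omega)]
    omega

theorem lower_apply (f : Staircase (n + 1)) {i : ℕ} (hbefore : ∀ t < i, f (t + 1) ≤ t)
    (t : ℕ) : lower f hbefore t = if t < i then f (t + 1) else t :=
  rfl

theorem upper_apply (f : Staircase (n + 1)) (i t : ℕ) : upper f i t = f (t + i + 1) - (i + 1) :=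
  rfl

theorem join_apply {i : ℕ} (hi : i ≤ n) (g : Staircase i) (h : Staircase (n - i)) (j : ℕ) :
    join hi g h j = if j ≤ i then g (j - 1) else h (j - (i + 1)) + (i + 1) :=
  rfl

theorem firstReturn_join {i : Fin (n + 1)} (g : Staircase i) (h : Staircase (n - i)) :
    (join i.is_le g h).firstReturn = i := by
  refine firstReturn_eq_iff.2 ⟨?_, fun t ht => ?_⟩
  · rw [join_apply, if_neg (by omega), Nat.sub_self, h.apply_zero, zero_add]
  · rw [join_apply, if_pos (by omega), Nat.add_sub_cancel]
    exact g.le_self t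

theorem lower_join {i : ℕ} (hi : i ≤ n) (g : Staircase i) (h : Staircase (n - i))
    (hret : ∀ t < i, join hi g h (t + 1) ≤ t) : lower (join hi g h) hret = g := by
  ext t
  rw [lower_apply, join_apply]
  split_ifs with ht ht'
  · rw [Nat.add_sub_cancel]
  · omega
  · exact (g.eq_self_of_le (not_lt.1 ht)).symm

theorem upper_join {i : ℕ} (hi : i ≤ n) (g : Staircase i) (h : Staircase (n - i)) :
    upper (join hi g h) i = h := by
  ext t
  rw [upper_apply, join_apply, if_neg (by omega), Nat.add_sub_cancel,
    show t + i + 1 - (i + 1) = t by omega]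

theorem join_lower_upper (f : Staircase (n + 1)) {i : ℕ} (hi : i ≤ n)
    (hret : f (i + 1) = i + 1) (hbefore : ∀ t < i, f (t + 1) ≤ t) :
    join hi (lower f hbefore) (upper f i) = f := by
  ext j
  rw [join_apply, lower_apply, upper_apply]
  split_ifs with hj hj'
  · rcases j with _ | j
    · have := hbefore 0 hj'
      rw [zero_add] at this
      rw [Nat.zero_sub, zero_add, f.apply_zero]
      omega
    · rfl
  · obtain rfl : j = 0 := by omega
    exact f.apply_zero.symm
  · have := f.monotone (show i + 1 ≤ j by omega)
    rw [show j - (i + 1) + i + 1 = j by omega]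
    omega

noncomputable def firstReturnFiberEquiv (i : Fin (n + 1)) :
    {f : Staircase (n + 1) // f.firstReturn = i} ≃ Staircase i × Staircase (n - i) where
  toFun f := (lower f.1 (firstReturn_eq_iff.1 f.2).2, upper f.1 i)
  invFun gh := ⟨join i.is_le gh.1 gh.2, firstReturn_join gh.1 gh.2⟩
  left_inv f := Subtype.ext (join_lower_upper f.1 i.is_le (firstReturn_eq_iff.1 f.2).1
    (firstReturn_eq_iff.1 f.2).2)
  right_inv gh := Prod.ext
    (lower_join i.is_le gh.1 gh.2 (firstReturn_eq_iff.1 (firstReturn_join gh.1 gh.2)).2)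
    (upper_join i.is_le gh.1 gh.2)

theorem card_eq_catalan (n : ℕ) : Fintype.card (Staircase n) = catalan n := by
  induction n using Nat.strong_induction_on with
  | _ n ih =>
    rcases n with _ | n
    · rw [catalan_zero, Fintype.card_eq_one_iff]
      exact ⟨⟨id, monotone_id, fun _ => le_rfl, fun _ _ => rfl⟩,
        fun f => ext fun j => f.eq_self_of_le (Nat.zero_le j)⟩
    · rw [← Fintype.card_congr (Equiv.sigmaFiberEquiv firstReturn), Fintype.card_sigma,
        catalan_succ]
      refine Finset.sum_congr rfl fun i _ => ?_
      rw [Fintype.card_congr (firstReturnFiberEquiv i), Fintype.card_prod, ih i (by omega),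
        ih (n - i) (by omega)]

end Staircase

/-- C2-pairs on an `n`-element set are counted, up to isomorphism, by the Catalan number
`C_n = binom(2n, n) / (n+1)`. -/
theorem stmt_5 (n : ℕ) :
    Nonempty (Quot (isoC2 (n := n)) ≃ Fin (Nat.choose (2 * n) n / (n + 1))) := by
  have hcard : Fintype.card (Staircase n) = Nat.choose (2 * n) n / (n + 1) := by
    rw [Staircase.card_eq_catalan, catalan_eq_centralBinom_div, Nat.centralBinom]
  have hbij : Function.Bijective (Staircase.c2Class (n := n)) :=
    ⟨Staircase.c2Class_injective, Staircase.c2Class_surjective⟩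
  exact ⟨(Equiv.ofBijective _ hbij).symm.trans (Fintype.equivFinOfCardEq hcard)⟩

end FishburnPaper
end

section
/- For all natural numbers n, k and ℓ, the number of isomorphism classes of C1-pairs (S,R) on {1,…,n} with mmax(S) = k and mmax(R) = ℓ equals the number of isomorphism classes of C1-pairs (S,R) on {1,…,n} with mmax(S) = ℓ and mmax(R) = k. In other words, the statistics mmax(S) and mmax(R) have symmetric joint distribution on C1-pairs of order n. -/
open scoped Classical

namespace FishburnPaper

universe u

/-!
Read a C1-pair `(S, R)` as a plane forest: `x S y` says that `x` is a proper descendant of `y`,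
`x R y` that `x` lies to the left of `y`, and `S ∪ R` is the postorder. The `S`-maximal elements
are the roots and the `R`-maximal elements form the rightmost branch, which starts at the last
element `t`. When this branch has at least two elements, detaching the subtree of the last child
`u` of `t` as a new last tree adds a root and shortens the branch by one; attaching the last tree
below the root preceding it undoes this. Both operations are defined from the relations alone, so
they act on isomorphism classes, and for `k, ℓ ≥ 1` the classes with `(mmax S, mmax R) = (k, ℓ)`
are in bijection with those with `(k + ℓ - 1, 1)`.
-/

open Function

variable {X : Type*} {S R : X → X → Prop}

namespace IsC1Pair

theorem S_irrefl (h : IsC1Pair S R) (x : X) : ¬ S x x := h.1.1 x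

theorem R_irrefl (h : IsC1Pair S R) (x : X) : ¬ R x x := h.2.1.1 x

theorem S_trans (h : IsC1Pair S R) {x y z : X} : S x y → S y z → S x z := fun hxy hyz =>
  h.1.2 hxy hyz

theorem R_trans (h : IsC1Pair S R) {x y z : X} : R x y → R y z → R x z := fun hxy hyz =>
  h.2.1.2 hxy hyz

theorem not_R_of_S (h : IsC1Pair S R) {x y : X} (hS : S x y) : ¬ R x y ∧ ¬ R y x := by
  have hxy : x ≠ y := by rintro rfl; exact h.S_irrefl x hS
  rcases h.2.2.1 x y hxy with ⟨-, hR⟩ | ⟨-, hS'⟩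
  · exact not_or.mp hR
  · exact absurd (.inl hS) hS'

theorem trichotomy (h : IsC1Pair S R) {x y : X} (hxy : x ≠ y) :
    S x y ∨ S y x ∨ R x y ∨ R y x := by
  rcases h.2.2.1 x y hxy with ⟨hS | hS, -⟩ | ⟨hR | hR, -⟩ <;> simp [*]

theorem R_of_S_of_R (h : IsC1Pair S R) {x y z : X} (hxy : S x y) (hyz : R y z) : R x z := by
  refine h.2.2.2 x y z ?_ ?_ ?_ hxy hyz
  · rintro rfl; exact h.S_irrefl x hxy
  · rintro rfl; exact h.R_irrefl y hyz
  · rintro rfl; exact (h.not_R_of_S hxy).2 hyz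

theorem R_of_R_of_S (h : IsC1Pair S R) {x y w : X} (hyw : R y w) (hxw : S x w) : R y x := by
  have hxy : x ≠ y := by rintro rfl; exact (h.not_R_of_S hxw).1 hyw
  rcases h.trichotomy hxy with hS | hS | hR | hR
  · exact absurd (h.R_of_S_of_R hS hyw) (h.not_R_of_S hxw).1
  · exact absurd hyw (h.not_R_of_S (h.S_trans hS hxw)).1
  · exact absurd (h.R_trans hR hyw) (h.not_R_of_S hxw).1
  · exact hR

theorem S_chain (h : IsC1Pair S R) {x y z : X} (hxy : S x y) (hxz : S x z) (hyz : y ≠ z) :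
    S y z ∨ S z y := by
  rcases h.trichotomy hyz with hS | hS | hR | hR
  · exact .inl hS
  · exact .inr hS
  · exact absurd (h.R_of_S_of_R hxy hR) (h.not_R_of_S hxz).1
  · exact absurd (h.R_of_S_of_R hxz hR) (h.not_R_of_S hxy).1

theorem S_or_R_trans (h : IsC1Pair S R) {x y z : X} (hxy : S x y ∨ R x y)
    (hyz : S y z ∨ R y z) : S x z ∨ R x z := by
  rcases hxy with hxy | hxy <;> rcases hyz with hyz | hyz
  · exact .inl (h.S_trans hxy hyz)
  · exact .inr (h.R_of_S_of_R hxy hyz)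
  · have hxz : x ≠ z := by rintro rfl; exact (h.not_R_of_S hyz).2 hxy
    rcases h.trichotomy hxz with hS | hS | hR | hR
    · exact .inl hS
    · exact absurd (h.R_of_S_of_R hS hxy) (h.not_R_of_S hyz).2
    · exact .inr hR
    · exact absurd (h.R_trans hR hxy) (h.not_R_of_S hyz).2
  · exact .inr (h.R_trans hxy hyz)

theorem of_trichotomy (hSirr : ∀ x, ¬ S x x) (hStr : ∀ x y z, S x y → S y z → S x z)
    (hRirr : ∀ x, ¬ R x x) (hRtr : ∀ x y z, R x y → R y z → R x z)
    (htri : ∀ x y, x ≠ y → S x y ∨ S y x ∨ R x y ∨ R y x)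
    (hdisj : ∀ x y, S x y → ¬ R x y ∧ ¬ R y x)
    (hC1 : ∀ x y z, S x y → R y z → R x z) :
    IsC1Pair S R := by
  refine ⟨⟨hSirr, fun x y z => hStr x y z⟩, ⟨hRirr, fun x y z => hRtr x y z⟩,
    fun x y hxy => ?_, fun x y z _ _ _ => hC1 x y z⟩
  have hnS : ∀ {x y}, R x y → ¬ Cmp S x y := fun hR hS =>
    hS.elim (fun hS => (hdisj _ _ hS).1 hR) (fun hS => (hdisj _ _ hS).2 hR)
  rcases htri x y hxy with hxy | hxy | hxy | hxy
  · exact .inl ⟨.inl hxy, not_or.2 (hdisj x y hxy)⟩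
  · exact .inl ⟨.inr hxy, not_or.2 (hdisj y x hxy).symm⟩
  · exact .inr ⟨.inl hxy, hnS hxy⟩
  · exact .inr ⟨.inr hxy, fun hS => hnS hxy hS.symm⟩

end IsC1Pair

def IsLastIn (S R : X → X → Prop) (s : Set X) (x : X) : Prop :=
  x ∈ s ∧ ∀ z ∈ s, ¬ S x z ∧ ¬ R x z

def subtree (S : X → X → Prop) (u : X) : Set X := {x | x = u ∨ S x u}

@[simp] theorem mem_subtree {u x : X} : x ∈ subtree S u ↔ x = u ∨ S x u := Iff.rfl

/-- `t` is the last element and `u` its last child. -/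
def IsDetachable (S R : X → X → Prop) (t u : X) : Prop :=
  IsLastIn S R Set.univ t ∧ IsLastIn S R {z | S z t} u

/-- `u` is the last element and `t` the root of the tree preceding that of `u`. -/
def IsAttachable (S R : X → X → Prop) (t u : X) : Prop :=
  IsLastIn S R Set.univ u ∧ IsLastIn S R (subtree S u)ᶜ t

def detach (S R : X → X → Prop) (t u : X) : (X → X → Prop) × (X → X → Prop) :=
  (fun x y => S x y ∧ ¬ (y = t ∧ x ∈ subtree S u),
   fun x y => R x y ∨ (x = t ∧ y ∈ subtree S u))

def attach (S R : X → X → Prop) (t u : X) : (X → X → Prop) × (X → X → Prop) :=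
  (fun x y => S x y ∨ (y = t ∧ x ∈ subtree S u),
   fun x y => R x y ∧ ¬ (x = t ∧ y ∈ subtree S u))

theorem IsC1Pair.exists_isLastIn [Finite X] (h : IsC1Pair S R) {s : Set X} (hs : s.Nonempty) :
    ∃ x, IsLastIn S R s x := by
  let P : X → X → Prop := fun x y => S y x ∨ R y x
  have : IsTrans X P := ⟨fun _ _ _ hxy hyz => h.S_or_R_trans hyz hxy⟩
  have : Std.Irrefl P := ⟨fun x hx => hx.elim (h.S_irrefl x) (h.R_irrefl x)⟩
  obtain ⟨x, hx, hmin⟩ := (Finite.wellFounded_of_trans_of_irrefl P).has_min s hs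
  exact ⟨x, hx, fun z hz => not_or.mp (hmin z hz)⟩

theorem IsC1Pair.eq_of_isLastIn (h : IsC1Pair S R) {s : Set X} {x y : X}
    (hx : IsLastIn S R s x) (hy : IsLastIn S R s y) : x = y := by
  by_contra hxy
  have := hx.2 y hy.1
  have := hy.2 x hx.1
  rcases h.trichotomy hxy with hS | hS | hR | hR <;> simp_all

namespace IsDetachable

variable {t u : X}

theorem unique (h : IsC1Pair S R) {t' u' : X} (ht : IsDetachable S R t u)
    (ht' : IsDetachable S R t' u') : t = t' ∧ u = u' := by
  obtain rfl := h.eq_of_isLastIn ht.1 ht'.1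
  exact ⟨rfl, h.eq_of_isLastIn ht.2 ht'.2⟩

theorem S_of_mem_subtree (h : IsC1Pair S R) (ht : IsDetachable S R t u) {x : X}
    (hx : x ∈ subtree S u) : S x t :=
  hx.elim (fun hxu => hxu ▸ ht.2.1) (fun hxu => h.S_trans hxu ht.2.1)

theorem R_of_notMem_subtree (h : IsC1Pair S R) (ht : IsDetachable S R t u) {x y : X}
    (hx : x ∈ subtree S u) (hy : y ∉ subtree S u) (hyt : y ≠ t) : R y x := by
  have hyu : y ≠ u := fun hyu => hy (.inl hyu)
  have htop := ht.1.2 y trivial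
  have hlast := ht.2.2 y
  have hut := h.not_R_of_S ht.2.1
  have hRyu : R y u := by
    rcases h.trichotomy hyt with hS | hS | hR | hR
    · rcases h.trichotomy hyu with hS' | hS' | hR' | hR'
      · exact absurd (.inr hS') hy
      · exact absurd hS' (hlast hS).1
      · exact hR'
      · exact absurd hR' (hlast hS).2
    · exact absurd hS htop.1
    · rcases h.trichotomy hyu with hS' | hS' | hR' | hR'
      · exact absurd (.inr hS') hy
      · exact absurd (h.R_of_S_of_R hS' hR) hut.1
      · exact hR'
      · exact absurd (h.R_trans hR' hR) hut.1
    · exact absurd hR htop.2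
  rcases hx with rfl | hxu
  · exact hRyu
  · exact h.R_of_R_of_S hRyu hxu

theorem eq_of_S (h : IsC1Pair S R) (ht : IsDetachable S R t u) {z : X} (hz : S u z) :
    z = t := by
  by_contra hzt
  rcases h.trichotomy hzt with hS | hS | hR | hR
  · exact (ht.2.2 z hS).1 hz
  · exact (ht.1.2 z trivial).1 hS
  · exact (h.not_R_of_S ht.2.1).1 (h.R_of_S_of_R hz hR)
  · exact (ht.1.2 z trivial).2 hR

end IsDetachable

namespace IsAttachable

variable {t u : X}

theorem unique (h : IsC1Pair S R) {t' u' : X} (ht : IsAttachable S R t u)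
    (ht' : IsAttachable S R t' u') : t = t' ∧ u = u' := by
  obtain rfl := h.eq_of_isLastIn ht.1 ht'.1
  exact ⟨h.eq_of_isLastIn ht.2 ht'.2, rfl⟩

theorem R_of_notMem_subtree (h : IsC1Pair S R) (ht : IsAttachable S R t u) {x y : X}
    (hx : x ∈ subtree S u) (hy : y ∉ subtree S u) : R y x := by
  have hyu : y ≠ u := fun hyu => hy (.inl hyu)
  have hRyu : R y u := by
    rcases h.trichotomy hyu with hS | hS | hR | hR
    · exact absurd (.inr hS) hy
    · exact absurd hS (ht.1.2 y trivial).1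
    · exact hR
    · exact absurd hR (ht.1.2 y trivial).2
  rcases hx with rfl | hxu
  · exact hRyu
  · exact h.R_of_R_of_S hRyu hxu

theorem not_S (h : IsC1Pair S R) (ht : IsAttachable S R t u) (z : X) : ¬ S t z := by
  intro htz
  by_cases hz : z ∈ subtree S u
  · apply ht.2.1
    rcases hz with rfl | hzu
    · exact .inr htz
    · exact .inr (h.S_trans htz hzu)
  · exact (ht.2.2 z hz).1 htz

end IsAttachable

section Surgery

variable {t u : X}

theorem isC1Pair_detach (h : IsC1Pair S R) (ht : IsDetachable S R t u) :
    IsC1Pair (detach S R t u).1 (detach S R t u).2 := by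
  have hD := fun x => ht.S_of_mem_subtree h (x := x)
  have hRD := fun x y => ht.R_of_notMem_subtree h (x := x) (y := y)
  have hchild := fun z => ht.eq_of_S h (z := z)
  have htop := fun z => ht.1.2 z trivial
  simp only [detach, mem_subtree] at *
  apply IsC1Pair.of_trichotomy <;>
    grind [h.S_irrefl, h.R_irrefl, h.S_trans, h.R_trans, h.not_R_of_S, h.S_chain, h.trichotomy,
      h.R_of_S_of_R]

theorem isAttachable_detach (h : IsC1Pair S R) (ht : IsDetachable S R t u) :
    IsAttachable (detach S R t u).1 (detach S R t u).2 t u := by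
  have hRD := fun x y => ht.R_of_notMem_subtree h (x := x) (y := y)
  have hchild := fun z => ht.eq_of_S h (z := z)
  have htop := fun z => ht.1.2 z trivial
  have hlast := ht.2
  simp only [IsAttachable, IsLastIn, detach, mem_subtree, Set.mem_ofPred_eq, Set.mem_univ,
    Set.mem_compl_iff, true_implies] at *
  grind [h.S_irrefl, h.R_irrefl, h.S_trans, h.R_trans, h.not_R_of_S, h.trichotomy]

theorem isC1Pair_attach (h : IsC1Pair S R) (ht : IsAttachable S R t u) :
    IsC1Pair (attach S R t u).1 (attach S R t u).2 := by
  have hRD := fun x y => ht.R_of_notMem_subtree h (x := x) (y := y)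
  have htS := ht.not_S h
  have htop := fun z => ht.1.2 z trivial
  have hlast := ht.2
  simp only [attach, IsLastIn, mem_subtree, Set.mem_compl_iff] at *
  apply IsC1Pair.of_trichotomy <;>
    grind [h.S_irrefl, h.R_irrefl, h.S_trans, h.R_trans, h.not_R_of_S, h.trichotomy,
      h.R_of_S_of_R]

theorem isDetachable_attach (h : IsC1Pair S R) (ht : IsAttachable S R t u) :
    IsDetachable (attach S R t u).1 (attach S R t u).2 t u := by
  have hRD := fun x y => ht.R_of_notMem_subtree h (x := x) (y := y)
  have htS := ht.not_S h
  have htop := fun z => ht.1.2 z trivial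
  have hlast := ht.2
  simp only [IsDetachable, IsLastIn, attach, mem_subtree, Set.mem_ofPred_eq, Set.mem_univ,
    Set.mem_compl_iff, true_implies] at *
  grind [h.S_irrefl, h.R_irrefl, h.S_trans, h.not_R_of_S]

theorem attach_detach (h : IsC1Pair S R) (ht : IsDetachable S R t u) :
    attach (detach S R t u).1 (detach S R t u).2 t u = (S, R) := by
  have hD := fun x => ht.S_of_mem_subtree h (x := x)
  have htop := fun z => ht.1.2 z trivial
  have hut := ht.2.1
  simp only [attach, detach, mem_subtree] at *
  ext x y <;> grind [h.S_irrefl, h.not_R_of_S]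

theorem detach_attach (h : IsC1Pair S R) (ht : IsAttachable S R t u) :
    detach (attach S R t u).1 (attach S R t u).2 t u = (S, R) := by
  have hRD := fun x y => ht.R_of_notMem_subtree h (x := x) (y := y)
  have hlast := ht.2
  simp only [attach, detach, IsLastIn, mem_subtree, Set.mem_compl_iff] at *
  ext x y <;> grind [h.S_irrefl, h.not_R_of_S]

end Surgery

section Counting

theorem mmax_eq_ncard (Q : X → X → Prop) : mmax Q = {x | ∀ y, ¬ Q x y}.ncard :=
  Nat.card_coe_set_eq _

theorem mmax_of_isEmpty [IsEmpty X] (Q : X → X → Prop) : mmax Q = 0 :=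
  Nat.card_of_isEmpty

variable [Finite X] {t u : X}

theorem IsC1Pair.one_le_mmax [Nonempty X] (h : IsC1Pair S R) :
    1 ≤ mmax S ∧ 1 ≤ mmax R := by
  obtain ⟨t, -, ht⟩ := h.exists_isLastIn (s := Set.univ) Set.univ_nonempty
  rw [mmax_eq_ncard, mmax_eq_ncard, Nat.one_le_iff_ne_zero, Nat.one_le_iff_ne_zero]
  exact ⟨Set.ncard_ne_zero_of_mem (a := t) fun z => (ht z trivial).1,
    Set.ncard_ne_zero_of_mem (a := t) fun z => (ht z trivial).2⟩

theorem IsC1Pair.mmax_eq_zero_iff (h : IsC1Pair S R) : mmax S = 0 ↔ mmax R = 0 := by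
  cases isEmpty_or_nonempty X
  · simp [mmax_of_isEmpty]
  · have := h.one_le_mmax
    omega

theorem mmax_detach_fst (h : IsC1Pair S R) (ht : IsDetachable S R t u) :
    mmax (detach S R t u).1 = mmax S + 1 := by
  have hchild := fun z => ht.eq_of_S h (z := z)
  have hut := ht.2.1
  have hmax : {x | ∀ y, ¬ (detach S R t u).1 x y} = insert u {x | ∀ y, ¬ S x y} := by
    ext x
    simp only [detach, mem_subtree, Set.mem_ofPred_eq, Set.mem_insert_iff]
    grind [h.S_irrefl]
  rw [mmax_eq_ncard, mmax_eq_ncard, hmax,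
    Set.ncard_insert_of_notMem fun hu : ∀ y, ¬ S u y => hu t ht.2.1]

theorem mmax_detach_snd (ht : IsDetachable S R t u) :
    mmax (detach S R t u).2 + 1 = mmax R := by
  have htop := fun z => ht.1.2 z trivial
  have hmax : {x | ∀ y, ¬ (detach S R t u).2 x y} = {x | ∀ y, ¬ R x y} \ {t} := by
    ext x
    simp only [detach, mem_subtree, Set.mem_ofPred_eq, Set.mem_sdiff, Set.mem_singleton_iff]
    grind
  rw [mmax_eq_ncard, mmax_eq_ncard, hmax,
    Set.ncard_sdiff_singleton_add_one (s := {x | ∀ y, ¬ R x y}) fun z => (htop z).2]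

theorem IsDetachable.two_le_mmax (h : IsC1Pair S R) (ht : IsDetachable S R t u) :
    2 ≤ mmax R := by
  have : Nonempty X := ⟨t⟩
  have := (isC1Pair_detach h ht).one_le_mmax.2
  have := mmax_detach_snd ht
  omega

theorem IsC1Pair.exists_isDetachable (h : IsC1Pair S R) (hR : 2 ≤ mmax R) :
    ∃ t u, IsDetachable S R t u := by
  rw [mmax_eq_ncard] at hR
  obtain ⟨x, -⟩ := Set.nonempty_of_ncard_ne_zero (by omega : {x | ∀ y, ¬ R x y}.ncard ≠ 0)
  obtain ⟨t, ht⟩ := h.exists_isLastIn (s := Set.univ) ⟨x, trivial⟩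
  obtain ⟨y, hy, hyt⟩ := Set.exists_ne_of_one_lt_ncard hR t
  have hyt' : S y t := by
    rcases h.trichotomy hyt with hS | hS | hR | hR
    · exact hS
    · exact absurd hS (ht.2 y trivial).1
    · exact absurd hR (hy t)
    · exact absurd hR (ht.2 y trivial).2
  obtain ⟨u, hu⟩ := h.exists_isLastIn (s := {z | S z t}) ⟨y, hyt'⟩
  exact ⟨t, u, ht, hu⟩

theorem IsC1Pair.exists_isAttachable (h : IsC1Pair S R) (hS : 2 ≤ mmax S) :
    ∃ t u, IsAttachable S R t u := by
  rw [mmax_eq_ncard] at hS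
  obtain ⟨x, -⟩ := Set.nonempty_of_ncard_ne_zero (by omega : {x | ∀ y, ¬ S x y}.ncard ≠ 0)
  obtain ⟨u, hu⟩ := h.exists_isLastIn (s := Set.univ) ⟨x, trivial⟩
  obtain ⟨y, hy, hyu⟩ := Set.exists_ne_of_one_lt_ncard hS u
  obtain ⟨t, ht⟩ :=
    h.exists_isLastIn (s := (subtree S u)ᶜ) ⟨y, fun hy' => hy'.elim hyu (hy u)⟩
  exact ⟨t, u, hu, ht⟩

end Counting

section Relabel

variable {Y : Type*} (f : X ≃ Y) (S R : Y → Y → Prop) (t u : X)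

theorem isDetachable_onFun :
    IsDetachable (S on f) (R on f) t u ↔ IsDetachable S R (f t) (f u) := by
  simp [IsDetachable, IsLastIn, f.forall_congr_left, onFun]

theorem isAttachable_onFun :
    IsAttachable (S on f) (R on f) t u ↔ IsAttachable S R (f t) (f u) := by
  simp [IsAttachable, IsLastIn, f.forall_congr_left, f.injective.eq_iff, f.symm_apply_eq, onFun]

theorem detach_onFun : detach (S on f) (R on f) t u =
    ((detach S R (f t) (f u)).1 on f, (detach S R (f t) (f u)).2 on f) := by
  ext x y <;> simp [detach, f.injective.eq_iff, onFun]

theorem attach_onFun : attach (S on f) (R on f) t u =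
    ((attach S R (f t) (f u)).1 on f, (attach S R (f t) (f u)).2 on f) := by
  ext x y <;> simp [attach, f.injective.eq_iff, onFun]

end Relabel

section Classes

variable {n : ℕ} {p q : C1PairsOn n}

theorem isoC1_iff :
    isoC1 p q ↔ ∃ f : Fin n ≃ Fin n, p.1.1 = (q.1.1 on f) ∧ p.1.2 = (q.1.2 on f) := by
  refine ⟨fun ⟨f, hf⟩ => ⟨f, ?_, ?_⟩, fun ⟨f, hS, hR⟩ => ⟨f, fun x y => ?_⟩⟩
  · ext x y; exact (hf x y).1
  · ext x y; exact (hf x y).2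
  · rw [hS, hR]; exact ⟨Iff.rfl, Iff.rfl⟩

noncomputable def detachLast (p : C1PairsOn n) : C1PairsOn n :=
  if h : ∃ t u, IsDetachable p.1.1 p.1.2 t u then
    ⟨detach p.1.1 p.1.2 h.choose h.choose_spec.choose,
      isC1Pair_detach p.2 h.choose_spec.choose_spec⟩
  else p

noncomputable def attachLast (p : C1PairsOn n) : C1PairsOn n :=
  if h : ∃ t u, IsAttachable p.1.1 p.1.2 t u then
    ⟨attach p.1.1 p.1.2 h.choose h.choose_spec.choose,
      isC1Pair_attach p.2 h.choose_spec.choose_spec⟩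
  else p

theorem detachLast_of_isDetachable {t u : Fin n} (ht : IsDetachable p.1.1 p.1.2 t u) :
    (detachLast p).1 = detach p.1.1 p.1.2 t u := by
  have hex : ∃ t u, IsDetachable p.1.1 p.1.2 t u := ⟨t, u, ht⟩
  obtain ⟨rfl, rfl⟩ := IsDetachable.unique p.2 hex.choose_spec.choose_spec ht
  simp only [detachLast, dif_pos hex]

theorem attachLast_of_isAttachable {t u : Fin n} (ht : IsAttachable p.1.1 p.1.2 t u) :
    (attachLast p).1 = attach p.1.1 p.1.2 t u := by
  have hex : ∃ t u, IsAttachable p.1.1 p.1.2 t u := ⟨t, u, ht⟩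
  obtain ⟨rfl, rfl⟩ := IsAttachable.unique p.2 hex.choose_spec.choose_spec ht
  simp only [attachLast, dif_pos hex]

theorem isoC1_detachLast (hpq : isoC1 p q) : isoC1 (detachLast p) (detachLast q) := by
  obtain ⟨f, hS, hR⟩ := isoC1_iff.1 hpq
  by_cases hp : ∃ t u, IsDetachable p.1.1 p.1.2 t u
  · obtain ⟨t, u, ht⟩ := hp
    have ht' : IsDetachable q.1.1 q.1.2 (f t) (f u) := by
      rwa [hS, hR, isDetachable_onFun] at ht
    refine isoC1_iff.2 ⟨f, ?_⟩
    rw [detachLast_of_isDetachable ht, detachLast_of_isDetachable ht', hS, hR, detach_onFun]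
    exact ⟨rfl, rfl⟩
  · have hq : ¬ ∃ t u, IsDetachable q.1.1 q.1.2 t u := by
      rintro ⟨t, u, ht⟩
      refine hp ⟨f.symm t, f.symm u, ?_⟩
      rwa [hS, hR, isDetachable_onFun, f.apply_symm_apply, f.apply_symm_apply]
    rwa [detachLast, dif_neg hp, detachLast, dif_neg hq]

theorem isoC1_attachLast (hpq : isoC1 p q) : isoC1 (attachLast p) (attachLast q) := by
  obtain ⟨f, hS, hR⟩ := isoC1_iff.1 hpq
  by_cases hp : ∃ t u, IsAttachable p.1.1 p.1.2 t u
  · obtain ⟨t, u, ht⟩ := hp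
    have ht' : IsAttachable q.1.1 q.1.2 (f t) (f u) := by
      rwa [hS, hR, isAttachable_onFun] at ht
    refine isoC1_iff.2 ⟨f, ?_⟩
    rw [attachLast_of_isAttachable ht, attachLast_of_isAttachable ht', hS, hR, attach_onFun]
    exact ⟨rfl, rfl⟩
  · have hq : ¬ ∃ t u, IsAttachable q.1.1 q.1.2 t u := by
      rintro ⟨t, u, ht⟩
      refine hp ⟨f.symm t, f.symm u, ?_⟩
      rwa [hS, hR, isAttachable_onFun, f.apply_symm_apply, f.apply_symm_apply]
    rwa [attachLast, dif_neg hp, attachLast, dif_neg hq]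

theorem attachLast_detachLast (hp : 2 ≤ mmax p.1.2) : attachLast (detachLast p) = p := by
  obtain ⟨t, u, ht⟩ := p.2.exists_isDetachable hp
  have hd := detachLast_of_isDetachable ht
  have ha : IsAttachable (detachLast p).1.1 (detachLast p).1.2 t u := by
    rw [hd]; exact isAttachable_detach p.2 ht
  apply Subtype.ext
  rw [attachLast_of_isAttachable ha, hd]
  exact attach_detach p.2 ht

theorem detachLast_attachLast (hp : 2 ≤ mmax p.1.1) : detachLast (attachLast p) = p := by
  obtain ⟨t, u, ht⟩ := p.2.exists_isAttachable hp
  have ha := attachLast_of_isAttachable ht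
  have hd : IsDetachable (attachLast p).1.1 (attachLast p).1.2 t u := by
    rw [ha]; exact isDetachable_attach p.2 ht
  apply Subtype.ext
  rw [detachLast_of_isDetachable hd, ha]
  exact detach_attach p.2 ht

theorem mmax_detachLast (hp : 2 ≤ mmax p.1.2) :
    mmax (detachLast p).1.1 = mmax p.1.1 + 1 ∧ mmax (detachLast p).1.2 + 1 = mmax p.1.2 := by
  obtain ⟨t, u, ht⟩ := p.2.exists_isDetachable hp
  rw [detachLast_of_isDetachable ht]
  exact ⟨mmax_detach_fst p.2 ht, mmax_detach_snd ht⟩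

theorem two_le_mmax_attachLast (hp : 2 ≤ mmax p.1.1) : 2 ≤ mmax (attachLast p).1.2 := by
  obtain ⟨t, u, ht⟩ := p.2.exists_isAttachable hp
  rw [attachLast_of_isAttachable ht]
  exact (isDetachable_attach p.2 ht).two_le_mmax (isC1Pair_attach p.2 ht)

variable (n) in
def statClass (k ℓ : ℕ) : Set (Quot (isoC1 (n := n))) :=
  {q | ∃ p : C1PairsOn n, q = Quot.mk _ p ∧ mmax p.1.1 = k ∧ mmax p.1.2 = ℓ}

theorem statClass_eq_empty {k ℓ : ℕ} (h : ¬ (k = 0 ↔ ℓ = 0)) :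
    statClass n k ℓ = ∅ := by
  refine Set.eq_empty_of_forall_notMem ?_
  rintro _ ⟨p, -, rfl, rfl⟩
  exact h p.2.mmax_eq_zero_iff

theorem bijOn_detachLast {k ℓ : ℕ} (hk : 1 ≤ k) (hℓ : 1 ≤ ℓ) :
    Set.BijOn (Quot.map detachLast fun _ _ => isoC1_detachLast)
      (statClass n k (ℓ + 1)) (statClass n (k + 1) ℓ) := by
  refine Set.InvOn.bijOn (f' := Quot.map attachLast fun _ _ => isoC1_attachLast) ⟨?_, ?_⟩ ?_ ?_
  · rintro _ ⟨p, rfl, -, hp⟩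
    exact congrArg (Quot.mk _) (attachLast_detachLast (by omega))
  · rintro _ ⟨p, rfl, hp, -⟩
    exact congrArg (Quot.mk _) (detachLast_attachLast (by omega))
  · rintro _ ⟨p, rfl, hpS, hpR⟩
    obtain ⟨hS, hR⟩ := mmax_detachLast (p := p) (by omega)
    exact ⟨detachLast p, rfl, by omega, by omega⟩
  · rintro _ ⟨p, rfl, hpS, hpR⟩
    obtain ⟨hS, hR⟩ := mmax_detachLast (two_le_mmax_attachLast (p := p) (by omega))
    rw [detachLast_attachLast (by omega)] at hS hR
    exact ⟨attachLast p, rfl, by omega, by omega⟩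

theorem nonempty_statClass_equiv_statClass_one {k ℓ : ℕ} (hk : 1 ≤ k) :
    Nonempty (statClass n k (ℓ + 1) ≃ statClass n (k + ℓ) 1) := by
  induction ℓ generalizing k with
  | zero => exact ⟨Equiv.refl _⟩
  | succ ℓ ih =>
    obtain ⟨e⟩ := ih (k := k + 1) (by omega)
    rw [Nat.add_right_comm] at e
    exact ⟨((bijOn_detachLast hk (by omega)).equiv _).trans e⟩

end Classes

/-- Proposition 2 (pro-cat2): `mmax S` and `mmax R` have symmetric joint distribution on
isomorphism classes of C1-pairs of order `n`. -/
theorem stmt_8 (n k ℓ : ℕ) :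
    Nonempty
      ({q : Quot (isoC1 (n := n)) //
          ∃ p : C1PairsOn n, q = Quot.mk _ p ∧ mmax p.1.1 = k ∧ mmax p.1.2 = ℓ} ≃
       {q : Quot (isoC1 (n := n)) //
          ∃ p : C1PairsOn n, q = Quot.mk _ p ∧ mmax p.1.1 = ℓ ∧ mmax p.1.2 = k}) := by
  change Nonempty (statClass n k ℓ ≃ statClass n ℓ k)
  by_cases hkℓ : k = 0 ↔ ℓ = 0
  · rcases Nat.eq_zero_or_pos k with rfl | hk
    · obtain rfl := hkℓ.1 rfl
      exact ⟨Equiv.refl _⟩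
    obtain ⟨ℓ, rfl⟩ := Nat.exists_eq_add_one_of_ne_zero (show ℓ ≠ 0 by omega)
    obtain ⟨e₁⟩ := nonempty_statClass_equiv_statClass_one (n := n) (ℓ := ℓ) hk
    obtain ⟨e₂⟩ :=
      nonempty_statClass_equiv_statClass_one (n := n) (k := ℓ + 1) (ℓ := k - 1) (by omega)
    rw [show ℓ + 1 + (k - 1) = k + ℓ by omega, Nat.sub_add_cancel hk] at e₂
    exact ⟨e₁.trans e₂.symm⟩
  · rw [statClass_eq_empty hkℓ, statClass_eq_empty (by tauto)]
    exact ⟨Equiv.refl _⟩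

end FishburnPaper
end

section
/- If (T,S,R) is a Fishburn triple on a finite set X, then R is a (2+2)-free strict partial order on X, i.e., an interval order. -/
open scoped Classical

namespace FishburnPaper

universe u

/-- Lemma 7 (lem-fish), first part: the third component of a Fishburn triple is a
(2+2)-free strict partial order, i.e. an interval order. -/
theorem stmt_9 {X : Type u} [Finite X] (T S R : X → X → Prop)
    (h : IsFishburnTriple T S R) :
    StrictOrd R ∧ ¬ Contains22 R := by
  obtain ⟨hS, hR, hTR, hEx, hC1, hC1s, hP1, hP2⟩ := h
  refine ⟨hR, ?_⟩
  rintro ⟨a, b, c, d, hab, hac, had, hbc, hbd, hcd, Rab, Rcd,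
    nRba, nRac, nRca, nRad, nRda, nRbc, nRcb, nRbd, nRdb, nRdc⟩
  -- key: from the 2+2 configuration with `T c a`, derive False
  have key : ∀ a b c d : X, a ≠ b → a ≠ c → a ≠ d → b ≠ c → b ≠ d → c ≠ d →
      R a b → R c d → ¬ R a c → ¬ R c a → ¬ R a d → ¬ R d a →
      ¬ R b c → ¬ R c b → ¬ R b d → ¬ R d b → T c a → False := by
    intro a b c d hab hac had hbc hbd hcd Rab Rcd nRac nRca nRad nRda
      nRbc nRcb nRbd nRdb Tca
    -- c and b are comparable by T
    have hcbT : T c b ∨ T b c := by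
      have hex := hEx c b hbc.symm
      rcases hex.1 with h1 | h2 | h3
      · exact h1
      · rcases h2 with hScb | hSbc
        · exact absurd (hC1s c b a hbc.symm hab.symm hac.symm hScb Rab) nRac
        · exact absurd (hC1 b c d hbc hcd hbd hSbc Rcd) nRbd
      · rcases h3 with h | h
        · exact absurd h nRcb
        · exact absurd h nRbc
    have Tbc : T b c := by
      rcases hcbT with Tcb | Tbc
      · exact absurd ⟨c, a, b, hac.symm, hab, hbc.symm, Tca, Tcb, Rab⟩ hP1
      · exact Tbc
    -- T b c and R c d give T b d (since ¬ R b d)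
    have Tbd : T b d := by
      have := hTR.2 (x := b) (y := c) (z := d) (Or.inl Tbc) (Or.inr Rcd)
      rcases this with h | h
      · exact h
      · exact absurd h nRbd
    -- a and d are comparable by T
    have hadT : T a d ∨ T d a := by
      have hex := hEx a d had
      rcases hex.1 with h1 | h2 | h3
      · exact h1
      · rcases h2 with hSad | hSda
        · exact absurd (hC1s a d c had hcd.symm hac hSad Rcd) nRca
        · exact absurd (hC1 d a b had.symm hab hbd.symm hSda Rab) nRdb
      · rcases h3 with h | h
        · exact absurd h nRad
        · exact absurd h nRda
    have Tda : T d a := by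
      rcases hadT with Tad | Tda
      · exact absurd ⟨d, b, a, hbd.symm, hab.symm, had.symm, Tbd, Tad, Rab⟩ hP2
      · exact Tda
    exact absurd ⟨a, d, c, had, hcd.symm, hac, Tda, Tca, Rcd⟩ hP2
  -- a and c are comparable by T
  have hacT : T a c ∨ T c a := by
    have hex := hEx a c hac
    rcases hex.1 with h1 | h2 | h3
    · exact h1
    · rcases h2 with hSac | hSca
      · exact absurd (hC1 a c d hac hcd had hSac Rcd) nRad
      · exact absurd (hC1 c a b hac.symm hab hbc.symm hSca Rab) nRcb
    · rcases h3 with h | h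
      · exact absurd h nRac
      · exact absurd h nRca
  rcases hacT with Tac | Tca
  · exact key c d a b hcd hac.symm hbc.symm had.symm hbd.symm hab
      Rcd Rab nRca nRac nRcb nRbc nRda nRad nRdb nRbd Tac
  · exact key a b c d hab hac had hbc hbd hcd
      Rab Rcd nRac nRca nRad nRda nRbc nRcb nRbd nRdb Tca

end FishburnPaper
end
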